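/- arXiv:0902.0199 — 8 statements merged into one kernel-verified Lean document; each statement's English description precedes it below -/
import Mathlib

section
/- Thompson's group F does not satisfy any group identity: there is no nontrivial reduced word w in a free group (on any finite number of generators) such that w evaluates to the identity under every assignment of elements of F to its generators. Concretely: for every n and every w ∈ FreeGroup (Fin n) with w ≠ 1, there exists a map a : Fin n → F such that the image of w under the induced homomorphism FreeGroup.lift a is not the identity of F. -/
open scoped commutatorElement

set_option linter.unnecessarySeqFocus false
set_option linter.unusedSectionVars false

/-- The two relators of Thompson's group `F` in the free group on two generators:
`[x₀x₁⁻¹, x₀⁻¹x₁x₀]` and `[x₀x₁⁻¹, x₀⁻²x₁x₀²]`. -/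
def thompsonRels : Set (FreeGroup (Fin 2)) :=
  { ⁅FreeGroup.of (0 : Fin 2) * (FreeGroup.of (1 : Fin 2))⁻¹,
      (FreeGroup.of (0 : Fin 2))⁻¹ * FreeGroup.of (1 : Fin 2) * FreeGroup.of (0 : Fin 2)⁆,
    ⁅FreeGroup.of (0 : Fin 2) * (FreeGroup.of (1 : Fin 2))⁻¹,
      (FreeGroup.of (0 : Fin 2))⁻¹ ^ 2 * FreeGroup.of (1 : Fin 2) * FreeGroup.of (0 : Fin 2) ^ 2⁆ }

/-- Thompson's group `F`, presented as
`⟨x₀, x₁ ∣ [x₀x₁⁻¹, x₀⁻¹x₁x₀] = 1, [x₀x₁⁻¹, x₀⁻²x₁x₀²] = 1⟩`. -/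
abbrev ThompsonF : Type := PresentedGroup thompsonRels

open Equiv Filter Topology

noncomputable section

lemma Equiv.Perm.apply_inv_self {α : Type*} (f : Equiv.Perm α) (x : α) : f (f⁻¹ x) = x :=
  f.apply_symm_apply x

lemma Equiv.Perm.inv_apply_self {α : Type*} (f : Equiv.Perm α) (x : α) : f⁻¹ (f x) = x :=
  f.symm_apply_apply x




/-- halving-type map -/
def bFun (t : ℝ) : ℝ := if t ≤ 0 then t else if t ≤ 2 then t/2 else t - 1

/-- doubling-type map -/
def bInvFun (t : ℝ) : ℝ := if t ≤ 0 then t else if t ≤ 1 then 2*t else t + 1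

def bPerm : Equiv.Perm ℝ := by
  refine ⟨bFun, bInvFun, ?_, ?_⟩ <;>
    · intro t
      unfold bFun bInvFun
      split_ifs <;> linarith

def aPerm : Equiv.Perm ℝ := Equiv.addRight (-1 : ℝ)

lemma aPerm_apply (t : ℝ) : aPerm t = t - 1 := by
  simp [aPerm]; ring

lemma aPerm_inv_apply (t : ℝ) : aPerm⁻¹ t = t + 1 := by
  simp [aPerm]

lemma bPerm_apply (t : ℝ) : bPerm t = if t ≤ 0 then t else if t ≤ 2 then t/2 else t - 1 := rfl

lemma bPerm_inv_apply (t : ℝ) : bPerm⁻¹ t = if t ≤ 0 then t else if t ≤ 1 then 2*t else t + 1 := rfl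

/-- `P = x₀ x₁⁻¹`. -/
def Pp : Equiv.Perm ℝ := aPerm * bPerm⁻¹

lemma Pp_apply (t : ℝ) : Pp t = if t ≤ 0 then t - 1 else if t ≤ 1 then 2*t - 1 else t := by
  simp only [Pp, Perm.mul_apply, bPerm_inv_apply, aPerm_apply]
  split_ifs <;> linarith

/-- `Q1 = x₀⁻¹ x₁ x₀`. -/
def Qq1 : Equiv.Perm ℝ := aPerm⁻¹ * bPerm * aPerm

lemma Qq1_apply (t : ℝ) :
    Qq1 t = if t ≤ 1 then t else if t ≤ 3 then (t+1)/2 else t - 1 := by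
  simp only [Qq1, Perm.mul_apply, bPerm_apply, aPerm_apply, aPerm_inv_apply]
  split_ifs <;> linarith

/-- `Q2 = x₀⁻² x₁ x₀²`. -/
def Qq2 : Equiv.Perm ℝ := (aPerm⁻¹)^2 * bPerm * aPerm^2

lemma sq_apply (g : Equiv.Perm ℝ) (t : ℝ) : (g^2) t = g (g t) := by
  rw [sq]; rfl

lemma Qq2_apply (t : ℝ) :
    Qq2 t = if t ≤ 2 then t else if t ≤ 4 then (t+2)/2 else t - 1 := by
  simp only [Qq2, Perm.mul_apply, sq_apply, bPerm_apply, aPerm_apply, aPerm_inv_apply]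
  split_ifs <;> linarith

lemma commute_of_half_supports (f g : Equiv.Perm ℝ) (c : ℝ)
    (hf1 : ∀ x, c ≤ x → f x = x) (hf2 : ∀ x, x ≤ c → f x ≤ c)
    (hg1 : ∀ x, x ≤ c → g x = x) (hg2 : ∀ x, c ≤ x → c ≤ g x) :
    f * g = g * f := by
  ext x
  simp only [Perm.mul_apply]
  rcases le_total x c with h | h
  · rw [hg1 x h, hg1 (f x) (hf2 x h)]
  · rw [hf1 x h, hf1 (g x) (hg2 x h)]

lemma comm1 : Pp * Qq1 = Qq1 * Pp := by
  apply commute_of_half_supports _ _ 1 <;> intro x hx <;>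
    simp only [Pp_apply, Qq1_apply] <;> split_ifs <;> linarith

lemma comm2 : Pp * Qq2 = Qq2 * Pp := by
  apply commute_of_half_supports _ _ 2 <;> intro x hx <;>
    simp only [Pp_apply, Qq2_apply] <;> split_ifs <;> linarith



variable {M : Type*} {n : ℕ}



def evalList (a : Fin n → Equiv.Perm M) (S : List (Fin n × Bool)) : Equiv.Perm M :=
  (S.map fun l => cond l.2 (a l.1) (a l.1)⁻¹).prod

lemma evalList_nil (a : Fin n → Equiv.Perm M) : evalList a [] = 1 := rfl

lemma evalList_cons (a : Fin n → Equiv.Perm M) (l : Fin n × Bool) (S : List (Fin n × Bool)) :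
    evalList a (l :: S) = (cond l.2 (a l.1) (a l.1)⁻¹) * evalList a S := by
  simp [evalList]

lemma evalList_mem (H : Subgroup (Equiv.Perm M)) (a : Fin n → Equiv.Perm M)
    (ha : ∀ i, a i ∈ H) (S : List (Fin n × Bool)) : evalList a S ∈ H := by
  induction S with
  | nil => exact H.one_mem
  | cons l S IH =>
    rw [evalList_cons]
    refine H.mul_mem ?_ IH
    cases l.2
    · exact H.inv_mem (ha l.1)
    · exact ha l.1

theorem abert_main (H : Subgroup (Equiv.Perm M)) (O : M → Prop) (p₀ : M) (hp₀ : O p₀)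
    (hOinv : ∀ g ∈ H, ∀ x : M, O x → O (g x))
    (SEP : ∀ x : M, O x → ∀ Y Z : Set M, Y.Finite → Z.Finite → x ∉ Y →
      ∃ h ∈ H, (∀ y ∈ Y, h y = y) ∧ h x ∉ Z) :
    ∀ L : List (Fin n × Bool), List.Chain' (fun p q => p.1 = q.1 → p.2 = q.2) L →
    ∃ a : Fin n → Equiv.Perm M, (∀ i, a i ∈ H) ∧
      Set.InjOn (fun j : ℕ => evalList a (L.drop j) p₀) {j : ℕ | j ≤ L.length} := by
  intro L
  induction L with
  | nil =>
    intro _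
    refine ⟨fun _ => 1, fun _ => H.one_mem, ?_⟩
    intro j hj j' hj' _
    simp only [Set.mem_setOf_eq, List.length_nil, Nat.le_zero] at hj hj'
    omega
  | cons l S IH =>
    obtain ⟨i, b⟩ := l
    intro hRed
    obtain ⟨hhead, hRedS⟩ := List.isChain_cons.mp hRed
    obtain ⟨a, haH, hinj⟩ := IH hRedS
    set pt : ℕ → M := fun j => evalList a (S.drop j) p₀ with hpt
    have hptlarge : ∀ j, S.length ≤ j → pt j = p₀ := by
      intro j hj
      simp only [hpt, List.drop_eq_nil_of_le hj, evalList_nil, Perm.one_apply]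
    have hOpt : ∀ j, O (pt j) :=
      fun j => hOinv _ (evalList_mem H a haH _) _ hp₀
    have hchain : ∀ (j : ℕ) (hj : j < S.length),
        pt j = (cond S[j].2 (a S[j].1) (a S[j].1)⁻¹) (pt (j+1)) := by
      intro j hj
      simp only [hpt, List.drop_eq_getElem_cons hj, evalList_cons, Perm.mul_apply]
    set Pts : Set M := pt '' {j : ℕ | j ≤ S.length} with hPts
    have hPtsfin : Pts.Finite := (Set.finite_Iic S.length).image pt
    have hmemPts : ∀ j, j ≤ S.length → pt j ∈ Pts := fun j hj => ⟨j, hj, rfl⟩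
    set D : Set M := {m | ∃ (j : ℕ) (_ : j < S.length), S[j].1 = i ∧
        ((S[j].2 = true ∧ m = pt (j+1)) ∨ (S[j].2 = false ∧ m = pt j))} with hD
    have hDfin : D.Finite := by
      refine hPtsfin.subset ?_
      rintro m ⟨j, hj, -, (⟨-, rfl⟩ | ⟨-, rfl⟩)⟩
      · exact hmemPts _ (by omega)
      · exact hmemPts _ (by omega)
    set x : M := cond b (pt 0) ((a i)⁻¹ (pt 0)) with hx
    have hOx : O x := by
      cases b
      · exact hOinv _ (H.inv_mem (haH i)) _ (hOpt 0)
      · exact hOpt 0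
    have hheadne : ∀ (_ : 0 < S.length), S[0].1 = i → S[0].2 = b := by
      intro hS h1
      cases S with
      | nil => simp at hS
      | cons s₀ S' =>
        exact (hhead s₀ (by simp) h1.symm).symm
    have hxD : x ∉ D := by
      rintro ⟨j, hj, hgen, (⟨hb, hm⟩ | ⟨hb, hm⟩)⟩ <;> cases b <;>
        simp only [hx, Bool.cond_false, Bool.cond_true] at hm
      -- b = false, S[j] = (i, true), (a i)⁻¹ (pt 0) = pt (j+1)
      · have hc : pt j = (a S[j].1) (pt (j+1)) := by
          have := hchain j hj; rwa [hb, Bool.cond_true] at this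
        rw [hgen] at hc
        rw [← hm] at hc
        simp only [Perm.apply_inv_self] at hc
        have hj0 : j = 0 := hinj (by simp; omega) (by simp) hc
        subst hj0
        have h2 := hheadne (by omega) hgen
        rw [hb] at h2
        simp at h2
      -- b = true, S[j] = (i, true), pt 0 = pt (j+1)
      · have h0 : (0 : ℕ) = j + 1 := hinj (by simp) (by simp; omega) hm
        omega
      -- b = false, S[j] = (i, false), (a i)⁻¹ (pt 0) = pt j
      · have hc : pt j = (a S[j].1)⁻¹ (pt (j+1)) := by
          have := hchain j hj; rwa [hb, Bool.cond_false] at this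
        rw [hgen] at hc
        rw [hc] at hm
        have h2 : pt 0 = pt (j+1) := (a i)⁻¹.injective hm
        have h0 : (0 : ℕ) = j + 1 := hinj (by simp) (by simp; omega) h2
        omega
      -- b = true, S[j] = (i, false), pt 0 = pt j
      · have hj0 : (0 : ℕ) = j := hinj (by simp) (by simp; omega) hm
        subst j
        have h2 := hheadne (by omega) hgen
        rw [hb] at h2
        simp at h2
    obtain ⟨h, hhH, hfix, hz⟩ :=
      SEP x hOx D (cond b ((a i).symm '' Pts) Pts) hDfin
        (by cases b; exacts [hPtsfin, hPtsfin.image _]) hxD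
    have hfixinv : ∀ y ∈ D, h⁻¹ y = y := by
      intro y hy
      exact h.injective (by rw [Perm.apply_inv_self, hfix y hy])
    set a' : Fin n → Equiv.Perm M := Function.update a i (a i * cond b h h⁻¹) with ha'
    have ha'H : ∀ j, a' j ∈ H := by
      intro j
      rcases eq_or_ne j i with rfl | hne
      · rw [ha', Function.update_self]
        refine H.mul_mem (haH j) ?_
        cases b
        · exact H.inv_mem hhH
        · exact hhH
      · rw [ha', Function.update_of_ne hne]; exact haH j
    have ha'i : a' i = a i * cond b h h⁻¹ := Function.update_self i _ a
    have ha'ne : ∀ j, j ≠ i → a' j = a j := fun j hj => Function.update_of_ne hj _ a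
    have hcondfix : ∀ y ∈ D, (cond b h h⁻¹) y = y := by
      intro y hy; cases b
      · exact hfixinv y hy
      · exact hfix y hy
    have hcondfixinv : ∀ y ∈ D, (cond b h h⁻¹)⁻¹ y = y := by
      intro y hy; cases b
      · simp only [Bool.cond_false, inv_inv]; exact hfix y hy
      · exact hfixinv y hy
    have hpres : ∀ j, evalList a' (S.drop j) p₀ = pt j := by
      have key : ∀ d, evalList a' (S.drop (S.length - d)) p₀ = pt (S.length - d) := by
        intro d
        induction d with
        | zero =>
          simp only [Nat.sub_zero, List.drop_length, evalList_nil, Perm.one_apply]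
          exact (hptlarge _ le_rfl).symm
        | succ d IHd =>
          rcases le_or_gt S.length d with hd | hd
          · have he : S.length - (d+1) = S.length - d := by omega
            rw [he]; exact IHd
          · have hj : S.length - (d+1) < S.length := by omega
            have hj1 : (S.length - (d+1)) + 1 = S.length - d := by omega
            set j := S.length - (d+1) with hjdef
            rw [List.drop_eq_getElem_cons hj, evalList_cons, Perm.mul_apply, hj1, IHd, ← hj1]
            rcases eq_or_ne S[j].1 i with heq | hne
            · rcases hb : S[j].2 with _ | _
              · -- letter (i, false)
                have hmemD : pt j ∈ D := ⟨j, hj, heq, Or.inr ⟨hb, rfl⟩⟩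
                have hc : pt j = (a S[j].1)⁻¹ (pt (j+1)) := by
                  have := hchain j hj; rwa [hb, Bool.cond_false] at this
                simp only [Bool.cond_false]
                rw [heq, ha'i, mul_inv_rev, Perm.mul_apply, ← heq, ← hc]
                exact hcondfixinv _ hmemD
              · -- letter (i, true)
                have hmemD : pt (j+1) ∈ D := ⟨j, hj, heq, Or.inl ⟨hb, rfl⟩⟩
                have hc : pt j = (a S[j].1) (pt (j+1)) := by
                  have := hchain j hj; rwa [hb, Bool.cond_true] at this
                simp only [Bool.cond_true]
                rw [heq, ha'i, Perm.mul_apply, hcondfix _ hmemD, ← heq, ← hc]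
            · rw [ha'ne _ hne]
              have := hchain j hj
              rcases hb : S[j].2 with _ | _ <;> rw [hb] at this <;>
                simp only [Bool.cond_false, Bool.cond_true] at this ⊢ <;> exact this.symm
      intro j
      rcases le_or_gt S.length j with hj | hj
      · simp only [List.drop_eq_nil_of_le hj, evalList_nil, Perm.one_apply]
        exact (hptlarge _ hj).symm
      · have hjj : j = S.length - (S.length - j) := by omega
        rw [hjj]; exact key _
    have h00 : evalList a' S p₀ = pt 0 := by
      have := hpres 0; rwa [List.drop_zero] at this
    have hq : evalList a' (((i, b) :: S).drop 0) p₀ ∉ Pts := by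
      have h0 : evalList a' (((i, b) :: S).drop 0) p₀
          = (cond b (a' i) (a' i)⁻¹) (pt 0) := by
        rw [List.drop_zero, evalList_cons, Perm.mul_apply, h00]
      rw [h0]
      cases b
      · -- q = h x with Z = Pts
        have he : (a' i)⁻¹ (pt 0) = h x := by
          rw [ha'i]
          simp only [Bool.cond_false, mul_inv_rev, Perm.mul_apply, inv_inv, hx]
        simp only [Bool.cond_false, he]
        simpa using hz
      · -- q = (a i) (h x), Z = (a i).symm '' Pts
        simp only [Bool.cond_true] at hz ⊢
        rw [ha'i]
        intro hmem
        refine hz ⟨_, hmem, ?_⟩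
        simp only [Bool.cond_true, Perm.mul_apply, hx]
        exact (a i).symm_apply_apply _
    refine ⟨a', ha'H, ?_⟩
    intro j hj j' hj' heq
    simp only [Set.mem_setOf_eq, List.length_cons] at hj hj'
    simp only at heq
    match j, j' with
    | 0, 0 => rfl
    | 0, j' + 1 =>
      exfalso
      rw [show ((i,b) :: S).drop (j'+1) = S.drop j' from rfl, hpres j'] at heq
      exact hq (heq ▸ hmemPts j' (by omega))
    | j + 1, 0 =>
      exfalso
      rw [show ((i,b) :: S).drop (j+1) = S.drop j from rfl, hpres j] at heq
      exact hq (heq ▸ hmemPts j (by omega))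
    | j + 1, j' + 1 =>
      rw [show ((i,b) :: S).drop (j+1) = S.drop j from rfl,
        show ((i,b) :: S).drop (j'+1) = S.drop j' from rfl, hpres j, hpres j'] at heq
      have := hinj (show j ∈ {j : ℕ | j ≤ S.length} by simp only [Set.mem_setOf_eq]; omega)
        (show j' ∈ {j : ℕ | j ≤ S.length} by simp only [Set.mem_setOf_eq]; omega) heq
      omega







/-- The subgroup generated by the two Thompson generators. -/
def Hgp : Subgroup (Equiv.Perm ℝ) := Subgroup.closure {aPerm, bPerm}

lemma aPerm_memH : aPerm ∈ Hgp := Subgroup.subset_closure (by simp)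
lemma bPerm_memH : bPerm ∈ Hgp := Subgroup.subset_closure (by simp)
lemma Pp_memH : Pp ∈ Hgp := Hgp.mul_mem aPerm_memH (Hgp.inv_mem bPerm_memH)
lemma Qq1_memH : Qq1 ∈ Hgp :=
  Hgp.mul_mem (Hgp.mul_mem (Hgp.inv_mem aPerm_memH) bPerm_memH) aPerm_memH

lemma strictMono_aPerm : StrictMono ⇑aPerm := by
  intro s t h; rw [aPerm_apply, aPerm_apply]; linarith

lemma strictMono_bPerm : StrictMono ⇑bPerm := by
  intro s t h; rw [bPerm_apply, bPerm_apply]; split_ifs <;> linarith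

lemma strictMono_inv_perm {g : Equiv.Perm ℝ} (hg : StrictMono ⇑g) : StrictMono ⇑g⁻¹ := by
  intro s t h
  have := hg.lt_iff_lt (a := g⁻¹ s) (b := g⁻¹ t)
  rw [Perm.apply_inv_self, Perm.apply_inv_self] at this
  exact this.mp h

lemma strictMono_memH : ∀ g ∈ Hgp, StrictMono ⇑g := by
  intro g hg
  refine Subgroup.closure_induction ?_ ?_ ?_ ?_ hg
  · rintro x (rfl | rfl)
    · exact strictMono_aPerm
    · exact strictMono_bPerm
  · intro s t h; simpa using h
  · intro u v _ _ hu hv s t h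
    exact hu (hv h)
  · intro u _ hu
    exact strictMono_inv_perm hu

lemma continuous_memH : ∀ g ∈ Hgp, Continuous ⇑g := by
  intro g hg
  exact (strictMono_memH g hg).monotone.continuous_of_surjective g.surjective

-- fixed point helpers
lemma perm_fix_inv {g : Equiv.Perm ℝ} {t : ℝ} (h : g t = t) : g⁻¹ t = t :=
  g.injective (by rw [Perm.apply_inv_self, h])

lemma perm_fix_pow {g : Equiv.Perm ℝ} {t : ℝ} (h : g t = t) : ∀ m : ℕ, (g^m) t = t := by
  intro m
  induction m with
  | zero => simp
  | succ m IH => rw [pow_succ', Perm.mul_apply, IH, h]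

/-- the bump, supported on `(0,3)`. -/
def Dp : Equiv.Perm ℝ := bPerm⁻¹ * Qq1

lemma Dp_memH : Dp ∈ Hgp := Hgp.mul_mem (Hgp.inv_mem bPerm_memH) Qq1_memH

lemma Dp_apply (t : ℝ) :
    Dp t = if t ≤ 0 then t else if t ≤ 1 then 2*t else if t ≤ 3 then (t+3)/2 else t := by
  simp only [Dp, Perm.mul_apply, Qq1_apply, bPerm_inv_apply]
  split_ifs <;> linarith

lemma Dp_fix {t : ℝ} (h : t ≤ 0 ∨ 3 ≤ t) : Dp t = t := by
  rw [Dp_apply]; rcases h with h | h <;> split_ifs <;> linarith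

lemma Dp_move {t : ℝ} (h0 : 0 < t) (h3 : t < 3) : t < Dp t ∧ Dp t < 3 := by
  rw [Dp_apply]; split_ifs <;> constructor <;> linarith

-- endpoint sequences
def lseq (k : ℕ) : ℝ := 1 - (1/2)^k
def rseq (k : ℕ) : ℝ := 1 + 2*(1/2)^k

lemma lseq_mem (k : ℕ) : 0 ≤ lseq k ∧ lseq k < 1 := by
  unfold lseq
  constructor
  · have h1 : ((1:ℝ)/2)^k ≤ 1 := pow_le_one₀ (by norm_num) (by norm_num)
    linarith
  · have h2 : (0:ℝ) < (1/2)^k := pow_pos (by norm_num) k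
    linarith

lemma rseq_mem (k : ℕ) : 1 < rseq k ∧ rseq k ≤ 3 := by
  unfold rseq
  constructor
  · have h2 : (0:ℝ) < (1/2)^k := pow_pos (by norm_num) k
    linarith
  · have h1 : ((1:ℝ)/2)^k ≤ 1 := pow_le_one₀ (by norm_num) (by norm_num)
    linarith

lemma Pp_fix {t : ℝ} (h : 1 ≤ t) : Pp t = t := by
  rw [Pp_apply]; split_ifs <;> linarith

lemma PpInv_fix {t : ℝ} (h : 1 ≤ t) : Pp⁻¹ t = t := perm_fix_inv (Pp_fix h)

lemma Qq1_fix {t : ℝ} (h : t ≤ 1) : Qq1 t = t := by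
  rw [Qq1_apply]; split_ifs <;> linarith

lemma PpInv_lseq (k : ℕ) : Pp⁻¹ (lseq k) = lseq (k+1) := by
  have h := lseq_mem k
  apply Pp.injective
  rw [Perm.apply_inv_self, Pp_apply]
  have h1 : lseq (k+1) = (lseq k + 1)/2 := by
    unfold lseq; rw [pow_succ]; ring
  split_ifs with h2 h3
  · have := lseq_mem (k+1); linarith
  · rw [h1]; ring
  · have : lseq (k+1) < 1 := (lseq_mem (k+1)).2
    linarith

lemma Qq1_rseq (k : ℕ) : Qq1 (rseq k) = rseq (k+1) := by
  have h := rseq_mem k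
  rw [Qq1_apply]
  have h1 : rseq (k+1) = (rseq k + 1)/2 := by
    unfold rseq; rw [pow_succ]; ring
  split_ifs with h2 h3
  · linarith
  · rw [h1]
  · linarith

/-- the shrinking conjugator -/
def psiP (k : ℕ) : Equiv.Perm ℝ := (Pp⁻¹)^k * Qq1^k

lemma psiP_memH (k : ℕ) : psiP k ∈ Hgp :=
  Hgp.mul_mem (Hgp.pow_mem (Hgp.inv_mem Pp_memH) k) (Hgp.pow_mem Qq1_memH k)

lemma PpInv_pow_zero (k : ℕ) : ((Pp⁻¹)^k) 0 = lseq k := by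
  induction k with
  | zero => simp [lseq]
  | succ k IH => rw [pow_succ', Perm.mul_apply, IH, PpInv_lseq]

lemma Qq1_pow_three (k : ℕ) : (Qq1^k) 3 = rseq k := by
  induction k with
  | zero => norm_num [rseq]
  | succ k IH => rw [pow_succ', Perm.mul_apply, IH, Qq1_rseq]

lemma psiP_zero (k : ℕ) : psiP k 0 = lseq k := by
  unfold psiP
  rw [Perm.mul_apply, perm_fix_pow (Qq1_fix (by norm_num)) k, PpInv_pow_zero]

lemma psiP_three (k : ℕ) : psiP k 3 = rseq k := by
  unfold psiP
  rw [Perm.mul_apply, Qq1_pow_three,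
    perm_fix_pow (PpInv_fix (rseq_mem k).1.le) k]

lemma psiP_one (k : ℕ) : psiP k 1 = 1 := by
  unfold psiP
  rw [Perm.mul_apply, perm_fix_pow (Qq1_fix le_rfl) k,
    perm_fix_pow (PpInv_fix le_rfl) k]

/-- the small bump at scale `k` -/
def Vbump (k : ℕ) : Equiv.Perm ℝ := psiP k * Dp * (psiP k)⁻¹

lemma Vbump_memH (k : ℕ) : Vbump k ∈ Hgp :=
  Hgp.mul_mem (Hgp.mul_mem (psiP_memH k) Dp_memH) (Hgp.inv_mem (psiP_memH k))

lemma Vbump_fix {k : ℕ} {t : ℝ} (h : t ≤ lseq k ∨ rseq k ≤ t) : Vbump k t = t := by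
  have hmono := strictMono_memH _ (psiP_memH k)
  unfold Vbump
  rw [Perm.mul_apply, Perm.mul_apply]
  have hfix : Dp ((psiP k)⁻¹ t) = (psiP k)⁻¹ t := by
    apply Dp_fix
    rcases h with h | h
    · left
      have : psiP k ((psiP k)⁻¹ t) ≤ psiP k 0 := by
        rw [Perm.apply_inv_self, psiP_zero]; exact h
      exact hmono.le_iff_le.mp this
    · right
      have : psiP k 3 ≤ psiP k ((psiP k)⁻¹ t) := by
        rw [Perm.apply_inv_self, psiP_three]; exact h
      exact hmono.le_iff_le.mp this
  rw [hfix, Perm.apply_inv_self]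

lemma Vbump_move {k : ℕ} {t : ℝ} (h1 : lseq k < t) (h2 : t < rseq k) :
    t < Vbump k t ∧ Vbump k t < rseq k := by
  have hmono := strictMono_memH _ (psiP_memH k)
  unfold Vbump
  rw [Perm.mul_apply, Perm.mul_apply]
  set s := (psiP k)⁻¹ t with hs
  have hts : psiP k s = t := Perm.apply_inv_self _ _
  have hs0 : 0 < s := by
    have : psiP k 0 < psiP k s := by rw [hts, psiP_zero]; exact h1
    exact hmono.lt_iff_lt.mp this
  have hs3 : s < 3 := by
    have : psiP k s < psiP k 3 := by rw [hts, psiP_three]; exact h2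
    exact hmono.lt_iff_lt.mp this
  obtain ⟨hd1, hd2⟩ := Dp_move hs0 hs3
  constructor
  · calc t = psiP k s := hts.symm
    _ < psiP k (Dp s) := hmono hd1
  · calc psiP k (Dp s) < psiP k 3 := hmono hd2
    _ = rseq k := psiP_three k
    
/-- iterates of the bump at 1 -/
lemma Vbump_iter (k : ℕ) :
    ∀ m : ℕ, 1 ≤ ((Vbump k)^m) 1 ∧ ((Vbump k)^m) 1 < rseq k := by
  intro m
  induction m with
  | zero => simpa using (rseq_mem k).1
  | succ m IH =>
    rw [pow_succ', Perm.mul_apply]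
    have hl : lseq k < ((Vbump k)^m) 1 := lt_of_lt_of_le (lseq_mem k).2 IH.1
    obtain ⟨h1, h2⟩ := Vbump_move hl IH.2
    exact ⟨le_of_lt (lt_of_le_of_lt IH.1 h1), h2⟩

lemma Vbump_iter_strictMono (k : ℕ) : StrictMono (fun m : ℕ => ((Vbump k)^m) 1) := by
  apply strictMono_nat_of_lt_succ
  intro m
  obtain ⟨h1, h2⟩ := Vbump_iter k m
  have hl : lseq k < ((Vbump k)^m) 1 := lt_of_lt_of_le (lseq_mem k).2 h1
  have := (Vbump_move hl h2).1
  simpa [pow_succ', Perm.mul_apply] using this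

-- the orbit predicate
def Orb (x : ℝ) : Prop := ∃ g ∈ Hgp, g (1:ℝ) = x

lemma Orb_one : Orb 1 := ⟨1, Hgp.one_mem, rfl⟩

lemma Orb_inv : ∀ g ∈ Hgp, ∀ x : ℝ, Orb x → Orb (g x) := by
  rintro g hg x ⟨g0, hg0, rfl⟩
  exact ⟨g * g0, Hgp.mul_mem hg hg0, rfl⟩

lemma lseq_tendsto : Tendsto lseq atTop (𝓝 1) := by
  have h : Tendsto (fun k : ℕ => ((1:ℝ)/2)^k) atTop (𝓝 0) :=
    tendsto_pow_atTop_nhds_zero_of_lt_one (by norm_num) (by norm_num)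
  have h2 := h.const_sub 1
  rw [sub_zero] at h2
  exact h2

lemma rseq_tendsto : Tendsto rseq atTop (𝓝 1) := by
  have h : Tendsto (fun k : ℕ => ((1:ℝ)/2)^k) atTop (𝓝 0) :=
    tendsto_pow_atTop_nhds_zero_of_lt_one (by norm_num) (by norm_num)
  have h2 := (h.const_mul 2).const_add 1
  rw [mul_zero, add_zero] at h2
  exact h2

/-- The separation property of the concrete group. -/
lemma sep_concrete : ∀ x : ℝ, Orb x → ∀ Y Z : Set ℝ, Y.Finite → Z.Finite → x ∉ Y →
    ∃ h ∈ Hgp, (∀ y ∈ Y, h y = y) ∧ h x ∉ Z := by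
  rintro x ⟨g0, hg0H, rfl⟩ Y Z hY hZ hxY
  have hmono := strictMono_memH _ hg0H
  have hcont := continuous_memH _ hg0H
  have hltend : Tendsto (fun k => g0 (lseq k)) atTop (𝓝 (g0 1)) :=
    (hcont.continuousAt.tendsto).comp lseq_tendsto
  have hrtend : Tendsto (fun k => g0 (rseq k)) atTop (𝓝 (g0 1)) :=
    (hcont.continuousAt.tendsto).comp rseq_tendsto
  -- choose k such that the support interval avoids Y
  have hev : ∀ᶠ k in atTop, ∀ y ∈ Y, y ≤ g0 (lseq k) ∨ g0 (rseq k) ≤ y := by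
    rw [Filter.eventually_all_finite hY]
    intro y hy
    have hyne : y ≠ g0 1 := by rintro rfl; exact hxY hy
    rcases lt_or_gt_of_ne hyne with hlt | hgt
    · -- y < g0 1
      filter_upwards [hltend.eventually (eventually_gt_nhds hlt)] with k hk
      exact Or.inl hk.le
    · filter_upwards [hrtend.eventually (eventually_lt_nhds hgt)] with k hk
      exact Or.inr hk.le
  obtain ⟨k, hk⟩ := hev.exists
  -- choose m such that the iterate avoids Z
  set seq : ℕ → ℝ := fun m => g0 (((Vbump k)^m) 1) with hseq
  have hseqinj : Function.Injective seq := by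
    intro m m' h
    exact (Vbump_iter_strictMono k).injective (g0.injective h)
  have hbad : {m : ℕ | seq m ∈ Z}.Finite := by
    have : {m : ℕ | seq m ∈ Z} = seq ⁻¹' Z := rfl
    rw [this]
    exact Set.Finite.preimage hseqinj.injOn hZ
  obtain ⟨m, hm⟩ : ∃ m : ℕ, seq m ∉ Z := by
    by_contra hcon
    push_neg at hcon
    have : {m : ℕ | seq m ∈ Z} = Set.univ := Set.eq_univ_of_forall hcon
    rw [this] at hbad
    exact Set.infinite_univ hbad
  refine ⟨g0 * (Vbump k)^m * g0⁻¹,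
    Hgp.mul_mem (Hgp.mul_mem hg0H (Hgp.pow_mem (Vbump_memH k) m)) (Hgp.inv_mem hg0H), ?_, ?_⟩
  · intro y hy
    rw [Perm.mul_apply, Perm.mul_apply]
    have hfix : ((Vbump k)^m) (g0⁻¹ y) = g0⁻¹ y := by
      apply perm_fix_pow
      apply Vbump_fix
      rcases hk y hy with h | h
      · left
        have : g0 (g0⁻¹ y) ≤ g0 (lseq k) := by rw [Perm.apply_inv_self]; exact h
        exact hmono.le_iff_le.mp this
      · right
        have : g0 (rseq k) ≤ g0 (g0⁻¹ y) := by rw [Perm.apply_inv_self]; exact h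
        exact hmono.le_iff_le.mp this
    rw [hfix, Perm.apply_inv_self]
  · have h1 : g0⁻¹ (g0 1) = 1 := Perm.inv_apply_self _ _
    rw [Perm.mul_apply, Perm.mul_apply, h1]
    exact hm



section RedChain

variable {α : Type*} [DecidableEq α]

lemma chain'_of_no_cancel (L : List (α × Bool))
    (h : ∀ (L₁ L₂ : List (α × Bool)) (x : α) (b : Bool), L ≠ L₁ ++ (x, b) :: (x, !b) :: L₂) :
    List.Chain' (fun p q => p.1 = q.1 → p.2 = q.2) L := by
  induction L with
  | nil => exact List.isChain_nil
  | cons p T IH =>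
    cases T with
    | nil => exact List.isChain_singleton _
    | cons q T' =>
      rw [List.Chain', List.isChain_cons_cons]
      constructor
      · intro h1
        by_contra h2
        apply h [] T' p.1 p.2
        have hq : q = (p.1, !p.2) := by
          obtain ⟨qa, qb⟩ := q; obtain ⟨pa, pb⟩ := p
          simp only [Prod.mk.injEq]
          constructor
          · exact h1.symm
          · simp only at h1 h2
            cases pb <;> cases qb <;> simp_all
        rw [hq]
        simp
      · apply IH
        intro L₁ L₂ x b hEq
        exact h (p :: L₁) L₂ x b (by rw [hEq]; rfl)

lemma toWord_chain' (w : FreeGroup α) :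
    List.Chain' (fun p q => p.1 = q.1 → p.2 = q.2) w.toWord := by
  apply chain'_of_no_cancel
  intro L₁ L₂ x b hEq
  exact FreeGroup.reduce.not (L₁ := w.toWord) (by rw [FreeGroup.reduce_toWord]; exact hEq)

end RedChain


def genMap : Fin 2 → Equiv.Perm ℝ := ![aPerm, bPerm]

lemma rels_hold : ∀ r ∈ thompsonRels, FreeGroup.lift genMap r = 1 := by
  intro r hr
  rcases hr with h | h <;> subst h <;>
    simp only [map_commutatorElement, map_mul, map_inv, map_pow, FreeGroup.lift_apply_of,
      commutatorElement_eq_one_iff_mul_comm, genMap, Matrix.cons_val_zero, Matrix.cons_val_one,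
      Matrix.head_cons]
  · rw [show aPerm * bPerm⁻¹ = Pp from rfl, show aPerm⁻¹ * bPerm * aPerm = Qq1 from rfl]
    exact comm1
  · rw [show aPerm * bPerm⁻¹ = Pp from rfl, show aPerm⁻¹^2 * bPerm * aPerm^2 = Qq2 from rfl]
    exact comm2

def phi : ThompsonF →* Equiv.Perm ℝ := PresentedGroup.toGroup rels_hold

lemma phi_of0 : phi (PresentedGroup.of 0) = aPerm := PresentedGroup.toGroup.of rels_hold
lemma phi_of1 : phi (PresentedGroup.of 1) = bPerm := PresentedGroup.toGroup.of rels_hold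

lemma closure_le_range : Hgp ≤ phi.range := by
  rw [Hgp, Subgroup.closure_le]
  rintro x (h | h)
  · exact ⟨PresentedGroup.of 0, by rw [phi_of0, h]⟩
  · exact ⟨PresentedGroup.of 1, by rw [phi_of1]; exact h.symm⟩


/-- Thompson's group `F` satisfies no group identity: for every nontrivial reduced word `w`
in the free group on `n` generators there is an assignment of elements of `F` to the
generators under which `w` does not evaluate to the identity. -/
theorem thompson_satisfies_no_identity (n : ℕ) (w : FreeGroup (Fin n)) (hw : w ≠ 1) :
    ∃ a : Fin n → ThompsonF, FreeGroup.lift a w ≠ 1 := by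
  classical
  have hL : w.toWord ≠ [] := fun h => hw (FreeGroup.toWord_eq_nil_iff.mp h)
  obtain ⟨a, haH, hinj⟩ :=
    abert_main Hgp Orb (1 : ℝ) Orb_one Orb_inv sep_concrete w.toWord (toWord_chain' w)
  have hlift : FreeGroup.lift a w = evalList a w.toWord := by
    conv_lhs => rw [← FreeGroup.mk_toWord (x := w)]
    rw [FreeGroup.lift_mk]
    rfl
  have hne1 : evalList a w.toWord ≠ 1 := by
    intro hcon
    have h0 : (fun j : ℕ => evalList a (w.toWord.drop j) (1:ℝ)) 0
        = (fun j : ℕ => evalList a (w.toWord.drop j) (1:ℝ)) w.toWord.length := by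
      simp only [List.drop_zero, List.drop_length, evalList_nil, Equiv.Perm.one_apply, hcon]
    have := hinj (by simp) (by simp) h0
    exact hL (List.length_eq_zero_iff.mp this.symm)
  have hrange : ∀ i, ∃ t : ThompsonF, phi t = a i := fun i => closure_le_range (haH i)
  refine ⟨fun i => (hrange i).choose, ?_⟩
  intro hcon
  have hcomp : phi.comp (FreeGroup.lift fun i => (hrange i).choose) = FreeGroup.lift a := by
    apply FreeGroup.ext_hom
    intro i
    simp only [MonoidHom.comp_apply, FreeGroup.lift_apply_of]
    exact (hrange i).choose_spec
  have : FreeGroup.lift a w = 1 := by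
    rw [← hcomp]
    simp only [MonoidHom.comp_apply, hcon, map_one]
  exact hne1 (hlift ▸ this)

end
end

section
/- For any natural numbers n and k there exist n elements a₁, …, aₙ in Thompson's group F such that no nontrivial relation in n variables of length less than k is satisfied by a₁, …, aₙ. Concretely: for all n k : ℕ there exists a : Fin n → F such that for every w ∈ FreeGroup (Fin n) with w ≠ 1 and word length (FreeGroup.norm w) < k, the image of w under FreeGroup.lift a is not the identity of F. -/
open scoped commutatorElement

noncomputable section

namespace ThompsonAux

/-- The map `B` of the real model of Thompson's group. -/
def Bfun (t : ℝ) : ℝ := if t ≤ 0 then t else if t ≤ 1 then 2*t else t+1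

/-- Inverse of `Bfun`. -/
def Bifun (t : ℝ) : ℝ := if t ≤ 0 then t else if t ≤ 2 then t/2 else t-1

lemma Bifun_Bfun (t : ℝ) : Bifun (Bfun t) = t := by
  unfold Bfun Bifun; split_ifs <;> linarith

lemma Bfun_Bifun (t : ℝ) : Bfun (Bifun t) = t := by
  unfold Bfun Bifun; split_ifs <;> linarith

/-- `B` as a permutation of `ℝ`. -/
def B : Equiv.Perm ℝ := ⟨Bfun, Bifun, Bifun_Bfun, Bfun_Bifun⟩

/-- `A` (translation by 1) as a permutation of `ℝ`. -/
def A : Equiv.Perm ℝ := Equiv.addRight (1 : ℝ)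

@[simp] lemma A_apply (t : ℝ) : A t = t + 1 := rfl
@[simp] lemma A_inv_apply (t : ℝ) : A⁻¹ t = t - 1 := rfl
@[simp] lemma B_apply (t : ℝ) : B t = Bfun t := rfl
@[simp] lemma B_inv_apply (t : ℝ) : B⁻¹ t = Bifun t := rfl

/-- Images of the generators: `x₀ ↦ A⁻¹`, `x₁ ↦ B⁻¹`. -/
def genImg : Fin 2 → Equiv.Perm ℝ := ![A⁻¹, B⁻¹]

/-- `u = A⁻¹B`, the image of `x₀x₁⁻¹`. -/
def u : Equiv.Perm ℝ := A⁻¹ * B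
/-- image of `x₀⁻¹x₁x₀`. -/
def v1 : Equiv.Perm ℝ := A * B⁻¹ * A⁻¹
/-- image of `x₀⁻²x₁x₀²`. -/
def v2 : Equiv.Perm ℝ := A * (A * B⁻¹ * A⁻¹) * A⁻¹

set_option maxHeartbeats 1000000 in
lemma uv1_comm : u * v1 = v1 * u := by
  ext t
  simp only [u, v1, Equiv.Perm.mul_apply, A_apply, A_inv_apply, B_apply, B_inv_apply]
  unfold Bfun Bifun
  split_ifs <;> linarith

set_option maxHeartbeats 1000000 in
lemma uv2_comm : u * v2 = v2 * u := by
  ext t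
  simp only [u, v2, Equiv.Perm.mul_apply, A_apply, A_inv_apply, B_apply, B_inv_apply]
  unfold Bfun Bifun
  split_ifs <;> linarith

lemma relators_map_one : ∀ r ∈ thompsonRels, FreeGroup.lift genImg r = 1 := by
  intro r hr
  have h0 : FreeGroup.lift genImg (FreeGroup.of (0 : Fin 2)) = A⁻¹ := by
    simp [genImg]
  have h1 : FreeGroup.lift genImg (FreeGroup.of (1 : Fin 2)) = B⁻¹ := by
    simp [genImg]
  rcases hr with hr | hr <;> subst hr <;> rw [map_commutatorElement]
  · have e1 : FreeGroup.lift genImg (FreeGroup.of (0:Fin 2) * (FreeGroup.of (1:Fin 2))⁻¹) = u := by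
      rw [map_mul, map_inv, h0, h1]; simp [u]
    have e2 : FreeGroup.lift genImg
        ((FreeGroup.of (0:Fin 2))⁻¹ * FreeGroup.of (1:Fin 2) * FreeGroup.of (0:Fin 2)) = v1 := by
      rw [map_mul, map_mul, map_inv, h0, h1]; simp [v1]
    rw [e1, e2]
    exact commutatorElement_eq_one_iff_mul_comm.mpr uv1_comm
  · have e1 : FreeGroup.lift genImg (FreeGroup.of (0:Fin 2) * (FreeGroup.of (1:Fin 2))⁻¹) = u := by
      rw [map_mul, map_inv, h0, h1]; simp [u]
    have e2 : FreeGroup.lift genImg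
        ((FreeGroup.of (0:Fin 2))⁻¹ ^ 2 * FreeGroup.of (1:Fin 2) * FreeGroup.of (0:Fin 2) ^ 2) = v2 := by
      rw [map_mul, map_mul, map_pow, map_pow, map_inv, h0, h1]
      simp only [v2, pow_two, mul_inv_rev, inv_inv]
      group
    rw [e1, e2]
    exact commutatorElement_eq_one_iff_mul_comm.mpr uv2_comm

/-! Stage 2 : subgroup H, set X, support lemmas -/

/-- The homomorphism from Thompson's group to permutations of `ℝ`. -/
def φ : ThompsonF →* Equiv.Perm ℝ := PresentedGroup.toGroup relators_map_one

/-- The subgroup of `Perm ℝ` generated by `A` and `B`. -/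
def H : Subgroup (Equiv.Perm ℝ) := Subgroup.closure {A, B}

lemma A_mem_H : A ∈ H := Subgroup.subset_closure (by simp)
lemma B_mem_H : B ∈ H := Subgroup.subset_closure (by simp [Set.mem_insert_iff])

lemma H_le_range : H ≤ φ.range := by
  rw [H, Subgroup.closure_le]
  rintro g (rfl | rfl)
  · exact ⟨(PresentedGroup.of 0)⁻¹, by
      simp [φ, PresentedGroup.toGroup.of, genImg]⟩
  · exact ⟨(PresentedGroup.of 1)⁻¹, by
      simp [φ, PresentedGroup.toGroup.of, genImg]⟩

/-- The invariant set: rationals of the form `m/(3·2^q)` with `3 ∤ m`. -/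
def X : Set ℝ := {x | ∃ (m : ℤ) (q : ℕ), ¬ (3 ∣ m) ∧ x = (m : ℝ) / (3 * 2 ^ q)}

lemma not_three_dvd_two_mul {m : ℤ} (hm : ¬ (3 ∣ m)) : ¬ ((3:ℤ) ∣ 2 * m) := by
  intro h
  rcases (Int.prime_three.dvd_mul).mp h with h2 | h2
  · norm_num at h2
  · exact hm h2

lemma X_add_int {x : ℝ} (hx : x ∈ X) (z : ℤ) : x + z ∈ X := by
  obtain ⟨m, q, hm, rfl⟩ := hx
  refine ⟨m + 3 * 2 ^ q * z, q, ?_, ?_⟩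
  · intro h
    apply hm
    have h2 : m = (m + 3 * 2 ^ q * z) - 3 * (2 ^ q * z) := by ring
    rw [h2]
    exact dvd_sub h ⟨2 ^ q * z, by ring⟩
  · push_cast
    have : (2:ℝ) ^ q ≠ 0 := by positivity
    field_simp

lemma X_double {x : ℝ} (hx : x ∈ X) : 2 * x ∈ X := by
  obtain ⟨m, q, hm, rfl⟩ := hx
  cases q with
  | zero => exact ⟨2 * m, 0, not_three_dvd_two_mul hm, by push_cast; ring⟩
  | succ q' =>
    refine ⟨m, q', hm, ?_⟩
    have h2 : (2:ℝ) ^ q' ≠ 0 := by positivity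
    rw [pow_succ]
    field_simp

lemma X_half {x : ℝ} (hx : x ∈ X) : x / 2 ∈ X := by
  obtain ⟨m, q, hm, rfl⟩ := hx
  refine ⟨m, q + 1, hm, ?_⟩
  have h2 : (2:ℝ) ^ q ≠ 0 := by positivity
  rw [pow_succ]
  field_simp

lemma X_A {x : ℝ} (hx : x ∈ X) : A x ∈ X := by
  simpa using X_add_int hx 1

lemma X_Ainv {x : ℝ} (hx : x ∈ X) : A⁻¹ x ∈ X := by
  have := X_add_int hx (-1)
  simpa [sub_eq_add_neg] using this

lemma X_B {x : ℝ} (hx : x ∈ X) : B x ∈ X := by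
  show Bfun x ∈ X
  unfold Bfun
  split_ifs
  · exact hx
  · exact X_double hx
  · simpa using X_add_int hx 1

lemma X_Binv {x : ℝ} (hx : x ∈ X) : B⁻¹ x ∈ X := by
  show Bifun x ∈ X
  unfold Bifun
  split_ifs
  · exact hx
  · exact X_half hx
  · simpa [sub_eq_add_neg] using X_add_int hx (-1)

lemma X_H {g : Equiv.Perm ℝ} (hg : g ∈ H) {x : ℝ} (hx : x ∈ X) : g x ∈ X := by
  revert x
  have : ∀ x ∈ X, g x ∈ X ∧ g⁻¹ x ∈ X := by
    refine Subgroup.closure_induction (k := {A, B}) ?_ ?_ ?_ ?_ hg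
    · rintro g (rfl | rfl) x hx
      · exact ⟨X_A hx, X_Ainv hx⟩
      · exact ⟨X_B hx, X_Binv hx⟩
    · intro x hx
      simp only [Equiv.Perm.one_apply, inv_one]
      exact ⟨hx, hx⟩
    · intro a b _ _ ha hb x hx
      refine ⟨?_, ?_⟩
      · simpa [Equiv.Perm.mul_apply] using (ha _ (hb x hx).1).1
      · simpa [Equiv.Perm.mul_apply] using (hb _ ((ha x hx)).2).2
    · intro a _ ha x hx
      exact ⟨(ha x hx).2, by simpa using (ha x hx).1⟩
  intro x hx
  exact (this x hx).1

/-- `g` fixes every point outside `S`. -/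
def FixesOff (g : Equiv.Perm ℝ) (S : Set ℝ) : Prop := ∀ x, x ∉ S → g x = x

lemma FixesOff.mono {g : Equiv.Perm ℝ} {S T : Set ℝ} (h : FixesOff g S) (hST : S ⊆ T) :
    FixesOff g T := fun x hx => h x (fun hxS => hx (hST hxS))

lemma FixesOff.mem {g : Equiv.Perm ℝ} {S : Set ℝ} (h : FixesOff g S) {x : ℝ} (hx : x ∈ S) :
    g x ∈ S := by
  by_contra hgx
  have h1 : g (g x) = g x := h _ hgx
  have h2 : g x = x := g.injective h1
  rw [h2] at hgx
  exact hgx hx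

lemma FixesOff.inv {g : Equiv.Perm ℝ} {S : Set ℝ} (h : FixesOff g S) : FixesOff g⁻¹ S := by
  intro x hx
  have := h x hx
  conv_lhs => rw [← this]
  simp

lemma FixesOff.mul {g h : Equiv.Perm ℝ} {S : Set ℝ} (hg : FixesOff g S) (hh : FixesOff h S) :
    FixesOff (g * h) S := by
  intro x hx
  simp [Equiv.Perm.mul_apply, hh x hx, hg x hx]

lemma FixesOff.one {S : Set ℝ} : FixesOff 1 S := fun x _ => rfl

lemma commute_of_disjoint {f g : Equiv.Perm ℝ} {S T : Set ℝ} (hf : FixesOff f S)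
    (hg : FixesOff g T) (hST : ∀ x, x ∈ S → x ∉ T) : f * g = g * f := by
  ext x
  simp only [Equiv.Perm.mul_apply]
  by_cases hxS : x ∈ S
  · rw [hg x (hST x hxS), hg _ (hST _ (hf.mem hxS))]
  · by_cases hxT : x ∈ T
    · rw [hf x hxS, hf _ ?_]
      intro hmem
      exact hST _ hmem (hg.mem hxT)
    · rw [hf x hxS, hg x hxT, hf x hxS]
/-! Stage 3 : building blocks and the separation lemma -/

lemma Binv_formula {t : ℝ} (h0 : 0 < t) (h2 : t < 2) : B⁻¹ t = t / 2 := by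
  show Bifun t = t / 2
  unfold Bifun
  split_ifs <;> linarith

lemma A_zpow_apply (z : ℤ) (t : ℝ) : (A ^ z) t = t + z := by
  induction z using Int.induction_on generalizing t with
  | zero => simp
  | succ n ih =>
    rw [zpow_add_one, Equiv.Perm.mul_apply, ih, A_apply]
    push_cast; ring
  | pred n ih =>
    rw [zpow_sub_one, Equiv.Perm.mul_apply, ih, A_inv_apply]
    push_cast; ring

/-- Address maps: words acting as `t ↦ (t+p)/2^q` on `(0,1)`. -/
lemma addr_exists : ∀ (q : ℕ) (p : ℕ), p < 2 ^ q →
    ∃ u : Equiv.Perm ℝ, u ∈ H ∧ ∀ t ∈ Set.Ioo (0:ℝ) 1, u t = (t + p) / 2 ^ q := by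
  intro q
  induction q with
  | zero =>
    intro p hp
    interval_cases p
    exact ⟨1, one_mem H, fun t _ => by simp⟩
  | succ q ih =>
    intro p hp
    have hqpos : (0:ℝ) < 2 ^ q := by positivity
    by_cases hd : p < 2 ^ q
    · obtain ⟨u, hu, hformula⟩ := ih p hd
      refine ⟨B⁻¹ * u, mul_mem (inv_mem B_mem_H) hu, ?_⟩
      intro t ht
      have h1 : u t = (t + p) / 2 ^ q := hformula t ht
      have hmem : 0 < (t + p) / 2 ^ q ∧ (t + p) / 2 ^ q < 1 := by
        constructor
        · apply div_pos; · have := ht.1; positivity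
          · exact hqpos
        · rw [div_lt_one hqpos]
          have := ht.2
          push_cast
          push_cast at hd ⊢
          have : (p:ℝ) ≤ 2^q - 1 := by
            have : (p:ℝ) + 1 ≤ 2^q := by exact_mod_cast hd
            linarith
          linarith [ht.2]
      rw [Equiv.Perm.mul_apply, h1, Binv_formula hmem.1 (by linarith [hmem.2])]
      rw [pow_succ]
      field_simp
    · have hd2 : p - 2 ^ q < 2 ^ q := by
        have := hp
        simp [pow_succ] at this
        omega
      obtain ⟨u, hu, hformula⟩ := ih (p - 2 ^ q) hd2
      refine ⟨B⁻¹ * A * u, mul_mem (mul_mem (inv_mem B_mem_H) A_mem_H) hu, ?_⟩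
      intro t ht
      have h1 : u t = (t + (p - 2^q : ℕ)) / 2 ^ q := hformula t ht
      have hcast : ((p - 2^q : ℕ) : ℝ) = (p:ℝ) - 2^q := by
        push_cast [Nat.cast_sub (le_of_not_gt hd)]
        ring
      rw [hcast] at h1
      have hmem : 0 < (t + ((p:ℝ) - 2^q)) / 2 ^ q ∧ (t + ((p:ℝ) - 2^q)) / 2 ^ q < 1 := by
        have hple : (p:ℝ) ≥ 2^q := by exact_mod_cast le_of_not_gt hd
        have hplt : (p:ℝ) < 2^(q+1) := by exact_mod_cast hp
        constructor
        · apply div_pos _ hqpos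
          linarith [ht.1]
        · rw [div_lt_one hqpos]
          have hplt' : (p:ℝ) + 1 ≤ 2^q * 2 := by
            have h' : p + 1 ≤ 2^(q+1) := Nat.succ_le_of_lt hp
            exact_mod_cast (by simpa [pow_succ] using h')
          linarith [ht.2]
      have hA : A (u t) = (t + ((p:ℝ) - 2^q)) / 2 ^ q + 1 := by rw [h1]; rfl
      rw [Equiv.Perm.mul_apply, Equiv.Perm.mul_apply, hA,
        Binv_formula (by linarith [hmem.1]) (by linarith [hmem.2])]
      rw [pow_succ]
      field_simp
      ring

/-- The basic bump `c₀ = B⁻¹AB⁻¹A⁻¹B²`, supported in `(0,1)`, moving `1/3` and `2/3`. -/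
def c0 : Equiv.Perm ℝ := B⁻¹ * A * B⁻¹ * A⁻¹ * B * B

lemma c0_mem_H : c0 ∈ H := by
  unfold c0
  exact mul_mem (mul_mem (mul_mem (mul_mem (mul_mem (inv_mem B_mem_H) A_mem_H)
    (inv_mem B_mem_H)) (inv_mem A_mem_H)) B_mem_H) B_mem_H

lemma Bfun_nonpos {x : ℝ} (h : x ≤ 0) : Bfun x = x := by
  unfold Bfun; split_ifs <;> linarith

lemma Bfun_ge1 {x : ℝ} (h : 1 ≤ x) : Bfun x = x + 1 := by
  unfold Bfun; split_ifs <;> linarith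

lemma Bifun_nonpos {x : ℝ} (h : x ≤ 0) : Bifun x = x := by
  unfold Bifun; split_ifs <;> linarith

lemma Bifun_ge2 {x : ℝ} (h : 2 ≤ x) : Bifun x = x - 1 := by
  unfold Bifun; split_ifs <;> linarith

lemma c0_fix : FixesOff c0 (Set.Ioo 0 1) := by
  intro x hx
  have hx' : x ≤ 0 ∨ 1 ≤ x := by
    by_contra hcon
    push_neg at hcon
    exact hx ⟨hcon.1, hcon.2⟩
  simp only [c0, Equiv.Perm.mul_apply, A_apply, A_inv_apply, B_apply, B_inv_apply]
  rcases hx' with h | h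
  · rw [Bfun_nonpos h,
      Bfun_nonpos h,
      Bifun_nonpos (show x - 1 ≤ 0 by linarith),
      show x - 1 + 1 = x by ring,
      Bifun_nonpos h]
  · rw [Bfun_ge1 h,
      show Bfun (x + 1) = x + 1 + 1 from Bfun_ge1 (by linarith),
      show Bifun (x + 1 + 1 - 1) = x + 1 + 1 - 1 - 1 from Bifun_ge2 (by linarith),
      show x + 1 + 1 - 1 - 1 + 1 = x + 1 by ring,
      show Bifun (x + 1) = x + 1 - 1 from Bifun_ge2 (by linarith)]
    ring

lemma c0_onethird : c0 (1/3 : ℝ) = 7/12 := by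
  simp only [c0, Equiv.Perm.mul_apply, A_apply, A_inv_apply, B_apply, B_inv_apply]
  unfold Bfun Bifun
  norm_num

lemma c0_twothird : c0 (2/3 : ℝ) = 5/6 := by
  simp only [c0, Equiv.Perm.mul_apply, A_apply, A_inv_apply, B_apply, B_inv_apply]
  unfold Bfun Bifun
  norm_num
/-! Stage 4 : the separation lemma -/

lemma sep_exists {y : ℝ} (hy : y ∈ X) {l r : ℝ} (hl : l < y) (hr : y < r) :
    ∃ s : Equiv.Perm ℝ, s ∈ H ∧ s y ≠ y ∧ s y ∈ Set.Ioo l r ∧ FixesOff s (Set.Ioo l r) := by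
  obtain ⟨m, q0, hm, hyeq⟩ := hy
  -- choose the scale q
  have hδ : (0:ℝ) < min (y - l) (r - y) := lt_min (by linarith) (by linarith)
  obtain ⟨q1, hq1⟩ := exists_pow_lt_of_lt_one hδ (show (1/2 : ℝ) < 1 by norm_num)
  set q := max q0 q1 with hqdef
  have hq0 : q0 ≤ q := le_max_left _ _
  have hsmall : (1/2 : ℝ) ^ q < min (y - l) (r - y) :=
    lt_of_le_of_lt (pow_le_pow_of_le_one (by norm_num) (by norm_num) (le_max_right _ _)) hq1
  have hQpos : (0:ℝ) < 2 ^ q := by positivity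
  have hsmall' : 1 / 2 ^ q < min (y - l) (r - y) := by
    rwa [one_div_pow] at hsmall
  -- the integer M with 2^q y = M / 3
  set M : ℤ := m * 2 ^ (q - q0) with hMdef
  have hkey : (2:ℝ) ^ q * y = (M : ℝ) / 3 := by
    rw [hyeq, hMdef]
    have hsplit : q = q0 + (q - q0) := (Nat.add_sub_cancel' hq0).symm
    rw [hsplit, pow_add]
    have h1 : (2:ℝ) ^ q0 ≠ 0 := by positivity
    push_cast
    field_simp
    simp only [Nat.add_sub_cancel, Nat.add_sub_cancel_left]
    ring
  have hM : ¬ ((3:ℤ) ∣ M) := by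
    intro h
    rcases Int.prime_three.dvd_mul.mp h with h | h
    · exact hm h
    · have := Int.prime_three.dvd_of_dvd_pow h
      norm_num at this
  -- digits
  set c : ℤ := M % 3 with hcdef
  set N : ℤ := M / 3 with hNdef
  have hMNc : M = 3 * N + c := by
    rw [hNdef, hcdef]; linarith [Int.mul_ediv_add_emod M 3]
  have hc12 : c = 1 ∨ c = 2 := by
    have h1 : 0 ≤ c := Int.emod_nonneg _ (by norm_num)
    have h2 : c < 3 := Int.emod_lt_of_pos _ (by norm_num)
    have h3 : c ≠ 0 := by
      intro h0
      exact hM (Int.dvd_of_emod_eq_zero h0)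
    omega
  set p : ℤ := N % 2 ^ q with hpdef
  set z : ℤ := N / 2 ^ q with hzdef
  have hNzp : N = 2 ^ q * z + p := by
    rw [hpdef, hzdef]; linarith [Int.mul_ediv_add_emod N (2 ^ q)]
  have hp0 : 0 ≤ p := Int.emod_nonneg _ (by positivity)
  have hplt : p < 2 ^ q := Int.emod_lt_of_pos _ (by positivity)
  obtain ⟨u0, hu0H, hu0⟩ := addr_exists q p.toNat (by
    have : (p.toNat : ℤ) < ((2:ℤ) ^ q) := by rwa [Int.toNat_of_nonneg hp0]
    exact_mod_cast this)
  set u : Equiv.Perm ℝ := A ^ z * u0 with hudef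
  have huH : u ∈ H := mul_mem (zpow_mem A_mem_H z) hu0H
  have hpcast : ((p.toNat : ℕ) : ℝ) = (p : ℝ) := by
    rw [← Int.cast_natCast, Int.toNat_of_nonneg hp0]
  have hu : ∀ t ∈ Set.Ioo (0:ℝ) 1, u t = (t + N) / 2 ^ q := by
    intro t ht
    rw [hudef, Equiv.Perm.mul_apply, hu0 t ht, hpcast, A_zpow_apply]
    have hNcast : (N : ℝ) = 2 ^ q * z + p := by exact_mod_cast hNzp
    rw [hNcast]
    field_simp
    ring
  have himg : ∀ t ∈ Set.Ioo (0:ℝ) 1, u t ∈ Set.Ioo ((N:ℝ)/2^q) (((N:ℝ)+1)/2^q) := by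
    intro t ht
    rw [hu t ht]
    constructor
    · apply div_lt_div_of_pos_right ?_ hQpos
      linarith [ht.1]
    · apply div_lt_div_of_pos_right ?_ hQpos
      linarith [ht.2]
  have hJsub : Set.Ioo ((N:ℝ)/2^q) (((N:ℝ)+1)/2^q) ⊆ Set.Ioo l r := by
    have hlen : ((N:ℝ)+1)/2^q - (N:ℝ)/2^q = 1 / 2^q := by field_simp; ring
    have hymem : y ∈ Set.Ioo ((N:ℝ)/2^q) (((N:ℝ)+1)/2^q) := by
      have hyval : y = ((M:ℝ)/3) / 2^q := by
        rw [← hkey]; field_simp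
      have hMc : (M:ℝ) = 3*N + c := by exact_mod_cast hMNc
      rw [hyval, hMc]
      constructor
      · apply div_lt_div_of_pos_right ?_ hQpos
        rcases hc12 with h | h <;> rw [h] <;> push_cast <;> linarith
      · apply div_lt_div_of_pos_right ?_ hQpos
        rcases hc12 with h | h <;> rw [h] <;> push_cast <;> linarith
    intro x hx
    have h1 := hymem.1
    have h2 := hymem.2
    have h3 := hx.1
    have h4 := hx.2
    have h5 := lt_min_iff.mp hsmall'
    constructor
    · have : y - x < 1/2^q := by linarith
      linarith [h5.1]
    · have : x - y < 1/2^q := by linarith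
      linarith [h5.2]
  -- the separator
  set s : Equiv.Perm ℝ := u * c0 * u⁻¹ with hsdef
  have hsH : s ∈ H := mul_mem (mul_mem huH c0_mem_H) (inv_mem huH)
  have hyst : (c:ℝ)/3 ∈ Set.Ioo (0:ℝ) 1 := by
    rcases hc12 with h | h <;> rw [h] <;> norm_num
  have hust : u ((c:ℝ)/3) = y := by
    have hyval : y = ((M:ℝ)/3) / 2^q := by
      rw [eq_div_iff (ne_of_gt hQpos)]; linarith [hkey]
    have hMc : (M:ℝ) = 3*N + c := by exact_mod_cast hMNc
    have hsum : (c:ℝ)/3 + N = (M:ℝ)/3 := by linarith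
    rw [hu _ hyst, hyval, hsum]
  have huinvy : u⁻¹ y = (c:ℝ)/3 := by
    rw [← hust]; simp
  have hc0move : c0 ((c:ℝ)/3) ≠ (c:ℝ)/3 ∧ c0 ((c:ℝ)/3) ∈ Set.Ioo (0:ℝ) 1 := by
    rcases hc12 with h | h <;> rw [h]
    · rw [show ((1:ℤ):ℝ)/3 = 1/3 by norm_num, c0_onethird]
      norm_num
    · rw [show ((2:ℤ):ℝ)/3 = 2/3 by norm_num, c0_twothird]
      norm_num
  refine ⟨s, hsH, ?_, ?_, ?_⟩
  · rw [hsdef]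
    simp only [Equiv.Perm.mul_apply]
    rw [huinvy]
    intro hcon
    apply hc0move.1
    have := u.injective (hcon.trans hust.symm)
    rw [this]
  · rw [hsdef]
    simp only [Equiv.Perm.mul_apply]
    rw [huinvy]
    exact hJsub (himg _ hc0move.2)
  · apply FixesOff.mono ?_ hJsub
    intro x hxJ
    rw [hsdef]
    simp only [Equiv.Perm.mul_apply]
    have hnotin : u⁻¹ x ∉ Set.Ioo (0:ℝ) 1 := by
      intro hin
      apply hxJ
      have := himg _ hin
      simpa using this
    rw [c0_fix _ hnotin]
    simp
/-! Stage 5 : the trajectory induction -/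

variable {n : ℕ}

/-- Apply a single letter. -/
def app (g : Fin n → Equiv.Perm ℝ) (s : Fin n × Bool) : Equiv.Perm ℝ :=
  cond s.2 (g s.1) (g s.1)⁻¹

lemma app_eq (g : Fin n → Equiv.Perm ℝ) (s : Fin n × Bool) (x : ℝ) :
    app g s x = cond s.2 (g s.1 x) ((g s.1)⁻¹ x) := by
  rcases s with ⟨i, b⟩; cases b <;> rfl

/-- The trajectory of a point under a word, most recent point first. -/
def traj (g : Fin n → Equiv.Perm ℝ) : List (Fin n × Bool) → ℝ → List ℝ
  | [], x => [x]
  | s :: tl, x => app g s (traj g tl x).head! :: traj g tl x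

@[simp] lemma traj_nil (g : Fin n → Equiv.Perm ℝ) (x : ℝ) : traj g [] x = [x] := rfl

@[simp] lemma traj_cons (g : Fin n → Equiv.Perm ℝ) (s : Fin n × Bool)
    (tl : List (Fin n × Bool)) (x : ℝ) :
    traj g (s :: tl) x = app g s (traj g tl x).head! :: traj g tl x := rfl

lemma traj_ne_nil (g : Fin n → Equiv.Perm ℝ) (ls : List (Fin n × Bool)) (x : ℝ) :
    traj g ls x ≠ [] := by
  cases ls <;> simp

lemma traj_length (g : Fin n → Equiv.Perm ℝ) (ls : List (Fin n × Bool)) (x : ℝ) :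
    (traj g ls x).length = ls.length + 1 := by
  induction ls with
  | nil => rfl
  | cons s tl ih => simp [traj_cons, ih]

lemma traj_last_mem (g : Fin n → Equiv.Perm ℝ) (ls : List (Fin n × Bool)) (x : ℝ) :
    x ∈ traj g ls x := by
  induction ls with
  | nil => simp
  | cons s tl ih => rw [traj_cons]; exact List.mem_cons_of_mem _ ih

lemma traj_head_mem (g : Fin n → Equiv.Perm ℝ) (ls : List (Fin n × Bool)) (x : ℝ) :
    (traj g ls x).head! ∈ traj g ls x := by
  cases h : traj g ls x with
  | nil => exact absurd h (traj_ne_nil g ls x)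
  | cons a l => simp

/-- Evaluation of a word is the head of the trajectory. -/
lemma eval_eq_traj_head (g : Fin n → Equiv.Perm ℝ) (ls : List (Fin n × Bool)) (x : ℝ) :
    (ls.map (app g)).prod x = (traj g ls x).head! := by
  induction ls with
  | nil => simp
  | cons s tl ih =>
    rw [List.map_cons, List.prod_cons, Equiv.Perm.mul_apply, ih, traj_cons]
    rfl

lemma traj_suffix (g : Fin n → Equiv.Perm ℝ) {tl' tl : List (Fin n × Bool)} (x : ℝ)
    (h : tl' <:+ tl) : traj g tl' x <:+ traj g tl x := by
  induction tl with
  | nil =>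
    rw [List.suffix_nil.mp h]
  | cons s tlrest ih =>
    rcases List.suffix_cons_iff.mp h with h1 | h1
    · rw [h1]
    · exact (ih h1).trans (List.suffix_cons _ _)

/-- A nonempty suffix of a nodup list with the same head is the whole list. -/
lemma suffix_eq_of_head {S T : List ℝ} (h : S <:+ T) (hnd : T.Nodup) (hne : S ≠ [])
    (hh : S.head! = T.head!) : S = T := by
  obtain ⟨pre, rfl⟩ := h
  cases pre with
  | nil => simp
  | cons a pre' =>
    exfalso
    have hane : a ∉ pre' ++ S := by
      have h2 : (a :: (pre' ++ S)).Nodup := by simpa using hnd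
      exact (List.nodup_cons.mp h2).1
    apply hane
    apply List.mem_append_right
    have h3 : S.head! = a := by simpa using hh
    rw [← h3]
    exact List.head!_mem_self hne

lemma foldr_max_lt {l : List ℝ} {c a : ℝ} (ha : a < c) (h : ∀ x ∈ l, x < c) :
    l.foldr max a < c := by
  induction l with
  | nil => exact ha
  | cons b t ih =>
    simp only [List.foldr_cons]
    exact max_lt (h b (by simp)) (ih (fun x hx => h x (by simp [hx])))

lemma le_foldr_max_init {l : List ℝ} {a : ℝ} : a ≤ l.foldr max a := by
  induction l with
  | nil => simp
  | cons b t ih => exact ih.trans (le_max_right _ _)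

lemma mem_le_foldr_max {l : List ℝ} {a x : ℝ} (hx : x ∈ l) : x ≤ l.foldr max a := by
  induction l with
  | nil => simp at hx
  | cons b t ih =>
    rcases List.mem_cons.mp hx with rfl | hx'
    · exact le_max_left _ _
    · exact (ih hx').trans (le_max_right _ _)

lemma lt_foldr_min {l : List ℝ} {c a : ℝ} (ha : c < a) (h : ∀ x ∈ l, c < x) :
    c < l.foldr min a := by
  induction l with
  | nil => exact ha
  | cons b t ih =>
    simp only [List.foldr_cons]
    exact lt_min (h b (by simp)) (ih (fun x hx => h x (by simp [hx])))

lemma foldr_min_le_init {l : List ℝ} {a : ℝ} : l.foldr min a ≤ a := by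
  induction l with
  | nil => simp
  | cons b t ih => exact (min_le_right _ _).trans ih

lemma foldr_min_le_mem {l : List ℝ} {a x : ℝ} (hx : x ∈ l) : l.foldr min a ≤ x := by
  induction l with
  | nil => simp at hx
  | cons b t ih =>
    rcases List.mem_cons.mp hx with rfl | hx'
    · exact min_le_left _ _
    · exact (min_le_right _ _).trans (ih hx')

/-- The no-cancellation condition on adjacent letters. -/
def NoCancel (a b : Fin n × Bool) : Prop := ¬(b.1 = a.1 ∧ b.2 = !a.2)

/-- The key pointwise step: updating a generator by a separator does not change
old trajectory steps. -/
lemma update_step (G S : Equiv.Perm ℝ) (T : List ℝ) (y y0 : ℝ) (b b' : Bool)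
    (hzT : cond b' (G y) (G⁻¹ y) ∈ T) (hyT : y ∈ T)
    (hfix : ∀ t ∈ T, t ≠ cond b (G y0) (G⁻¹ y0) → S t = t)
    (hfixinv : ∀ t ∈ T, t ≠ cond b (G y0) (G⁻¹ y0) → S⁻¹ t = t)
    (hyy0 : y ≠ y0)
    (hjunc : cond b' (G y) (G⁻¹ y) = y0 → b' = b) :
    cond b' ((cond b (S * G) (G * S⁻¹)) y) ((cond b (S * G) (G * S⁻¹))⁻¹ y)
      = cond b' (G y) (G⁻¹ y) := by
  cases b <;> cases b' <;>
    simp only [cond_true, cond_false, mul_inv_rev, inv_inv,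
      Equiv.Perm.mul_apply] at hzT hfix hfixinv hjunc ⊢
  · -- b = false, b' = false : S (G⁻¹ y) = G⁻¹ y
    apply hfix _ hzT
    intro h
    exact hyy0 (G⁻¹.injective h)
  · -- b = false, b' = true : G (S⁻¹ y) = G y
    have hy : y ≠ G⁻¹ y0 := by
      intro h
      have h2 : G y = y0 := by rw [h]; simp
      simpa using hjunc h2
    rw [hfixinv _ hyT hy]
  · -- b = true, b' = false : G⁻¹ (S⁻¹ y) = G⁻¹ y
    have hy : y ≠ G y0 := by
      intro h
      have h2 : G⁻¹ y = y0 := by rw [h]; simp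
      simpa using hjunc h2
    rw [hfixinv _ hyT hy]
  · -- b = true, b' = true : S (G y) = G y
    apply hfix _ hzT
    intro h
    exact hyy0 (G.injective h)

lemma update_newpoint (G S : Equiv.Perm ℝ) (y0 : ℝ) (b : Bool) :
    cond b ((cond b (S * G) (G * S⁻¹)) y0) ((cond b (S * G) (G * S⁻¹))⁻¹ y0)
      = S (cond b (G y0) (G⁻¹ y0)) := by
  cases b <;>
    simp [mul_inv_rev, Equiv.Perm.mul_apply]

/-- The main induction: realizing a reduced word with an injective trajectory. -/
lemma abert_induction (L R x0 : ℝ) (hx0X : x0 ∈ X) (hx0 : x0 ∈ Set.Ioo L R) :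
    ∀ ls : List (Fin n × Bool), List.Chain' NoCancel ls →
    ∃ g : Fin n → Equiv.Perm ℝ,
      (∀ i, g i ∈ H) ∧ (∀ i, FixesOff (g i) (Set.Ioo L R)) ∧
      (traj g ls x0).Nodup ∧ (∀ x ∈ traj g ls x0, x ∈ X ∧ x ∈ Set.Ioo L R) := by
  intro ls hchain
  induction ls with
  | nil =>
    exact ⟨fun _ => 1, fun _ => one_mem H, fun _ => FixesOff.one, by simp,
      fun x hx => by simp at hx; exact hx ▸ ⟨hx0X, hx0⟩⟩
  | cons s tl ih =>
    obtain ⟨hjun, hchain'⟩ := List.isChain_cons.mp hchain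
    obtain ⟨g, hgH, hgfix, hnd, hmem⟩ := ih hchain'
    obtain ⟨i, b⟩ := s
    set T := traj g tl x0 with hTdef
    have hy0T : T.head! ∈ T := traj_head_mem g tl x0
    have hy0 := hmem T.head! hy0T
    have happX : ∀ (s' : Fin n × Bool) (x : ℝ), x ∈ X → app g s' x ∈ X := by
      intro s' x hx
      rw [app_eq]
      cases s'.2
      · exact X_H (inv_mem (hgH s'.1)) hx
      · exact X_H (hgH s'.1) hx
    have happIoo : ∀ (s' : Fin n × Bool) (x : ℝ), x ∈ Set.Ioo L R →
        app g s' x ∈ Set.Ioo L R := by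
      intro s' x hx
      rw [app_eq]
      cases s'.2
      · exact ((hgfix s'.1).inv).mem hx
      · exact (hgfix s'.1).mem hx
    have hq0X : app g (i, b) T.head! ∈ X := happX _ _ hy0.1
    have hq0Ioo : app g (i, b) T.head! ∈ Set.Ioo L R := happIoo _ _ hy0.2
    by_cases hcol : app g (i, b) T.head! ∈ T
    · -- collision: modify g i by a separator
      set q0 := app g (i, b) T.head! with hq0def
      set ll := (T.filter (fun t => decide (t < q0))).foldr max L with hlldef
      set rr := (T.filter (fun t => decide (q0 < t))).foldr min R with hrrdef
      have hll : ll < q0 := by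
        apply foldr_max_lt hq0Ioo.1
        intro x hx
        exact of_decide_eq_true (List.mem_filter.mp hx).2
      have hrr : q0 < rr := by
        apply lt_foldr_min hq0Ioo.2
        intro x hx
        exact of_decide_eq_true (List.mem_filter.mp hx).2
      have hLll : L ≤ ll := le_foldr_max_init
      have hrrR : rr ≤ R := foldr_min_le_init
      have hsub : Set.Ioo ll rr ⊆ Set.Ioo L R := fun x hx =>
        ⟨lt_of_le_of_lt hLll hx.1, lt_of_lt_of_le hx.2 hrrR⟩
      have hTout : ∀ t ∈ T, t ≠ q0 → t ∉ Set.Ioo ll rr := by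
        intro t ht htq hmem2
        rcases lt_trichotomy t q0 with h | h | h
        · have : t ≤ ll := mem_le_foldr_max (List.mem_filter.mpr ⟨ht, by simpa using h⟩)
          exact absurd hmem2.1 (not_lt.mpr this)
        · exact htq h
        · have : rr ≤ t := foldr_min_le_mem (List.mem_filter.mpr ⟨ht, by simpa using h⟩)
          exact absurd hmem2.2 (not_lt.mpr this)
      obtain ⟨sep, hsepH, hsepmove, hsepIoo, hsepfix⟩ := sep_exists hq0X hll hrr
      have hsepT : ∀ t ∈ T, t ≠ q0 → sep t = t := fun t ht htq => hsepfix t (hTout t ht htq)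
      have hsepTinv : ∀ t ∈ T, t ≠ q0 → sep⁻¹ t = t := fun t ht htq =>
        (hsepfix.inv) t (hTout t ht htq)
      set g' := Function.update g i (cond b (sep * g i) (g i * sep⁻¹)) with hg'def
      have hg'i : g' i = cond b (sep * g i) (g i * sep⁻¹) := Function.update_self i _ g
      have hg'ne : ∀ j, j ≠ i → g' j = g j := fun j hj => Function.update_of_ne hj _ g
      -- trajectory is preserved
      have hpres : ∀ tl' : List (Fin n × Bool), tl' <:+ tl →
          traj g' tl' x0 = traj g tl' x0 := by
        intro tl' hsuf
        induction tl' with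
        | nil => rfl
        | cons s' tl'' ih' =>
          have hsuf'' : tl'' <:+ tl := ((List.suffix_cons s' tl'').trans hsuf)
          have ihe : traj g' tl'' x0 = traj g tl'' x0 := ih' hsuf''
          rw [traj_cons, traj_cons, ihe]
          congr 1
          have hS'suf : traj g tl'' x0 <:+ T := traj_suffix g x0 hsuf''
          have hSS'suf : traj g (s' :: tl'') x0 <:+ T := traj_suffix g x0 hsuf
          have hyT : (traj g tl'' x0).head! ∈ T :=
            hS'suf.subset (traj_head_mem g tl'' x0)
          have hzT : app g s' (traj g tl'' x0).head! ∈ T := by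
            have : app g s' (traj g tl'' x0).head! ∈ traj g (s' :: tl'') x0 := by
              rw [traj_cons]; exact List.mem_cons_self
            exact hSS'suf.subset this
          obtain ⟨i', b'⟩ := s'
          by_cases hii : i' = i
          · rw [hii] at hsuf hSS'suf hzT ⊢
            -- head of a strict suffix differs from the head of T
            have hyy0 : (traj g tl'' x0).head! ≠ T.head! := by
              intro hyh
              have hS'T : traj g tl'' x0 = T :=
                suffix_eq_of_head hS'suf hnd (traj_ne_nil g tl'' x0) hyh
              have hlen := hSS'suf.length_le
              have h4 := congrArg List.length hS'T
              rw [traj_length] at h4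
              rw [traj_length, hTdef, traj_length] at hlen
              rw [hTdef, traj_length] at h4
              simp at hlen h4
              omega
            -- if the new point is the head of T, this is the junction letter
            have hjunc : app g (i, b') (traj g tl'' x0).head! = T.head! → b' = b := by
              intro hzh
              have hST : traj g ((i, b') :: tl'') x0 = T := by
                apply suffix_eq_of_head hSS'suf hnd (traj_ne_nil g _ x0)
                rw [traj_cons]
                simpa using hzh
              have htl : (i, b') :: tl'' = tl := by
                apply List.IsSuffix.eq_of_length hsuf
                have h5 := congrArg List.length hST
                rw [traj_length, hTdef, traj_length] at h5
                simpa using h5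
              have hnc : NoCancel (i, b) (i, b') := hjun (i, b') (by rw [← htl]; exact rfl)
              by_contra hbb
              exact hnc ⟨rfl, by cases b <;> cases b' <;> simp_all⟩
            rw [app_eq, app_eq, hg'i]
            rw [app_eq] at hzT hjunc
            rw [hq0def, app_eq] at hsepT hsepTinv
            exact update_step (g i) sep T _ T.head! b b' hzT hyT hsepT hsepTinv hyy0 hjunc
          · rw [app_eq, app_eq, hg'ne i' hii]
      -- assemble the new tuple
      have hpres_tl : traj g' tl x0 = T := hpres tl (List.suffix_refl tl)
      have happ' : app g' (i, b) T.head! = sep q0 := by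
        rw [app_eq]
        simp only [hg'i]
        rw [update_newpoint, hq0def, app_eq]
      have htraj' : traj g' ((i, b) :: tl) x0 = sep q0 :: T := by
        rw [traj_cons, hpres_tl, happ']
      have hq1T : sep q0 ∉ T := fun hmem2 => hTout _ hmem2 hsepmove hsepIoo
      have hq1X : sep q0 ∈ X := X_H hsepH hq0X
      have hq1Ioo : sep q0 ∈ Set.Ioo L R := hsub hsepIoo
      have hgi'H : cond b (sep * g i) (g i * sep⁻¹) ∈ H := by
        cases b
        · exact mul_mem (hgH i) (inv_mem hsepH)
        · exact mul_mem hsepH (hgH i)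
      have hgi'fix : FixesOff (cond b (sep * g i) (g i * sep⁻¹)) (Set.Ioo L R) := by
        cases b
        · exact (hgfix i).mul ((hsepfix.mono hsub).inv)
        · exact (hsepfix.mono hsub).mul (hgfix i)
      refine ⟨g', ?_, ?_, ?_, ?_⟩
      · intro j
        by_cases hj : j = i
        · rw [hj, hg'i]; exact hgi'H
        · rw [hg'ne j hj]; exact hgH j
      · intro j
        by_cases hj : j = i
        · rw [hj, hg'i]; exact hgi'fix
        · rw [hg'ne j hj]; exact hgfix j
      · rw [htraj', List.nodup_cons]
        exact ⟨hq1T, hnd⟩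
      · intro x hx
        rw [htraj'] at hx
        rcases List.mem_cons.mp hx with rfl | hx'
        · exact ⟨hq1X, hq1Ioo⟩
        · exact hmem x hx'
    · -- no collision
      refine ⟨g, hgH, hgfix, ?_, ?_⟩
      · rw [traj_cons, List.nodup_cons]
        exact ⟨hcol, hnd⟩
      · intro x hx
        rw [traj_cons] at hx
        rcases List.mem_cons.mp hx with rfl | hx'
        · exact ⟨hq0X, hq0Ioo⟩
        · exact hmem x hx'
/-! Stage 6 : assembling the tuple and the main theorem -/

lemma chain'_of_no_bad (l : List (Fin n × Bool))
    (h : ∀ (l₁ : List (Fin n × Bool)) (x : Fin n) (b : Bool) (l₂ : List (Fin n × Bool)),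
      l ≠ l₁ ++ (x, b) :: (x, !b) :: l₂) : l.Chain' NoCancel := by
  induction l with
  | nil => simp [List.Chain']
  | cons a tl ih =>
    cases tl with
    | nil => simp [List.Chain']
    | cons bb tl' =>
      show List.IsChain _ _
      rw [List.isChain_cons_cons]
      constructor
      · rintro ⟨h1, h2⟩
        apply h [] a.1 a.2 tl'
        have : bb = (a.1, !a.2) := Prod.ext h1 h2
        rw [this]
        simp
      · apply ih
        intro l₁ x b l₂ hEq
        exact h (a :: l₁) x b l₂ (by rw [hEq]; rfl)

lemma toWord_chain' (w : FreeGroup (Fin n)) : w.toWord.Chain' NoCancel := by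
  apply chain'_of_no_bad
  intro l₁ x b l₂ hEq
  exact FreeGroup.reduce.not (L₁ := w.toWord) (L₂ := l₁) (L₃ := l₂) (x := x) (b := b)
    (by rw [FreeGroup.reduce_toWord]; exact hEq)

lemma lift_eq_prod_app (f : Fin n → Equiv.Perm ℝ) (w : FreeGroup (Fin n)) :
    FreeGroup.lift f w = (w.toWord.map (app f)).prod := by
  conv_lhs => rw [← FreeGroup.mk_toWord (x := w)]
  rw [FreeGroup.lift_mk]
  rfl

/-- Pointwise description of a `noncommProd` localized to a region. -/
lemma noncommProd_apply_region {ι : Type*} [DecidableEq ι] (f : ι → Equiv.Perm ℝ) (w : ι)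
    (Sw : Set ℝ) (hw : ∀ x ∈ Sw, f w x ∈ Sw) :
    ∀ (F : Finset ι) (hcomm : (F : Set ι).Pairwise (fun a b => Commute (f a) (f b)))
      (_ : ∀ v ∈ F, v ≠ w → ∀ x ∈ Sw, f v x = x) (x : ℝ) (_ : x ∈ Sw),
      (F.noncommProd f hcomm) x = if w ∈ F then f w x else x := by
  intro F
  induction F using Finset.induction_on with
  | empty => simp
  | @insert a F' ha ih =>
    intro hcomm hothers x hx
    rw [Finset.noncommProd_insert_of_notMem F' a f hcomm ha, Equiv.Perm.mul_apply]
    have hcomm' : (F' : Set ι).Pairwise (fun a b => Commute (f a) (f b)) :=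
      hcomm.mono (fun u hu => Finset.mem_coe.mpr (Finset.mem_insert_of_mem (Finset.mem_coe.mp hu)))
    have hothers' : ∀ v ∈ F', v ≠ w → ∀ x ∈ Sw, f v x = x :=
      fun v hv => hothers v (Finset.mem_insert_of_mem hv)
    rw [ih hcomm' hothers' x hx]
    by_cases hwF : w ∈ insert a F'
    · rw [if_pos hwF]
      rcases Finset.mem_insert.mp hwF with rfl | hwF'
      · rw [if_neg ha]
      · rw [if_pos hwF']
        have haw : a ≠ w := by rintro rfl; exact ha hwF'
        exact hothers a (Finset.mem_insert_self a F') haw _ (hw x hx)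
    · rw [if_neg hwF, if_neg (fun h => hwF (Finset.mem_insert_of_mem h))]
      exact hothers a (Finset.mem_insert_self a F')
        (fun h => hwF (h ▸ Finset.mem_insert_self a F')) x hx

/-- Two tuples agreeing (with invariance) on a region evaluate words identically there. -/
lemma eval_agree (g h : Fin n → Equiv.Perm ℝ) (S : Set ℝ)
    (hagree : ∀ i, ∀ x ∈ S, g i x = h i x)
    (hinv1 : ∀ i, ∀ x ∈ S, h i x ∈ S) (hinv2 : ∀ i, ∀ x ∈ S, (h i)⁻¹ x ∈ S) :
    ∀ (ls : List (Fin n × Bool)) (x : ℝ), x ∈ S →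
      (ls.map (app g)).prod x = (ls.map (app h)).prod x ∧ (ls.map (app h)).prod x ∈ S := by
  have hagree_inv : ∀ i, ∀ x ∈ S, (g i)⁻¹ x = (h i)⁻¹ x := by
    intro i x hx
    have h1 : (h i)⁻¹ x ∈ S := hinv2 i x hx
    have h2 : g i ((h i)⁻¹ x) = x := by rw [hagree i _ h1]; simp
    calc (g i)⁻¹ x = (g i)⁻¹ (g i ((h i)⁻¹ x)) := by rw [h2]
    _ = (h i)⁻¹ x := by simp
  intro ls
  induction ls with
  | nil => intro x hx; exact ⟨rfl, hx⟩
  | cons s tl ih =>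
    intro x hx
    obtain ⟨ihe, ihm⟩ := ih x hx
    rw [List.map_cons, List.map_cons, List.prod_cons, List.prod_cons,
      Equiv.Perm.mul_apply, Equiv.Perm.mul_apply, ihe]
    constructor
    · rw [app_eq, app_eq]
      cases s.2
      · exact hagree_inv s.1 _ ihm
      · exact hagree s.1 _ ihm
    · rw [app_eq]
      cases s.2
      · exact hinv2 s.1 _ ihm
      · exact hinv1 s.1 _ ihm

/-- a region head point is in X -/
lemma base_mem_X (c : ℕ) : (c : ℝ) + 1/3 ∈ X := by
  refine ⟨3 * c + 1, 0, by omega, by push_cast; ring⟩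

/-- The per-word witness. -/
lemma per_word_witness (w : FreeGroup (Fin n)) (hw : w ≠ 1) (c : ℕ) :
    ∃ g : Fin n → Equiv.Perm ℝ,
      (∀ i, g i ∈ H) ∧ (∀ i, FixesOff (g i) (Set.Ioo (c : ℝ) (c + 1))) ∧
      FreeGroup.lift g w ((c : ℝ) + 1/3) ≠ ((c : ℝ) + 1/3) := by
  obtain ⟨g, hgH, hgfix, hnd, hmem⟩ :=
    abert_induction (c : ℝ) ((c : ℝ) + 1) ((c : ℝ) + 1/3) (base_mem_X c)
      (by constructor <;> norm_num) w.toWord (toWord_chain' w)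
  refine ⟨g, hgH, hgfix, ?_⟩
  rw [lift_eq_prod_app, eval_eq_traj_head]
  cases hls : w.toWord with
  | nil => exact absurd (FreeGroup.toWord_eq_nil_iff.mp hls) hw
  | cons s tl =>
    rw [traj_cons]
    have hqT : app g s (traj g tl ((c : ℝ) + 1/3)).head! ∉ traj g tl ((c : ℝ) + 1/3) := by
      rw [hls, traj_cons] at hnd
      exact (List.nodup_cons.mp hnd).1
    have hx0mem : ((c : ℝ) + 1/3) ∈ traj g tl ((c : ℝ) + 1/3) := traj_last_mem g tl _
    simp only [List.head!_cons]
    intro hcon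
    exact hqT (by rw [hcon]; exact hx0mem)
/-! Stage 7 : the main theorem -/

end ThompsonAux

open ThompsonAux in
/-- For any `n` and `k` there are `n` elements of Thompson's group `F` satisfying no
nontrivial relation in `n` variables of length less than `k`. -/
theorem thompson_tuple_no_short_relation (n k : ℕ) :
    ∃ a : Fin n → ThompsonF, ∀ w : FreeGroup (Fin n), w ≠ 1 → FreeGroup.norm w < k →
      FreeGroup.lift a w ≠ 1 := by
  classical
  -- the finite set of short nontrivial words
  set W : Set (FreeGroup (Fin n)) := {w | w ≠ 1 ∧ FreeGroup.norm w < k} with hWdef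
  have hWfin : W.Finite := by
    apply Set.Finite.subset
      ((List.finite_length_lt (Fin n × Bool) k).preimage
        (Set.injOn_of_injective FreeGroup.toWord_injective))
    intro w hw
    exact hw.2
  set Wf := hWfin.toFinset with hWfdef
  -- an injective integer label for each word
  set enc : FreeGroup (Fin n) → ℕ := fun w => Encodable.encode w.toWord with hencdef
  have henc : Function.Injective enc := fun v w h =>
    FreeGroup.toWord_injective (Encodable.encode_injective h)
  -- per-word witnesses in disjoint regions
  have hwit : ∀ w : FreeGroup (Fin n), ∃ g : Fin n → Equiv.Perm ℝ, w ≠ 1 →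
      ((∀ i, g i ∈ H) ∧ (∀ i, FixesOff (g i) (Set.Ioo ((enc w : ℝ)) ((enc w : ℝ) + 1))) ∧
        FreeGroup.lift g w ((enc w : ℝ) + 1/3) ≠ ((enc w : ℝ) + 1/3)) := by
    intro w
    by_cases hw : w = 1
    · exact ⟨fun _ => 1, fun h => absurd hw h⟩
    · obtain ⟨g, h1, h2, h3⟩ := per_word_witness w hw (enc w)
      exact ⟨g, fun _ => ⟨h1, h2, h3⟩⟩
  choose G hG using hwit
  -- disjointness of regions
  have hdisj : ∀ v w : FreeGroup (Fin n), v ≠ w →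
      ∀ x ∈ Set.Ioo ((enc v : ℝ)) ((enc v : ℝ) + 1),
        x ∉ Set.Ioo ((enc w : ℝ)) ((enc w : ℝ) + 1) := by
    intro v w hvw x hxv hxw
    have hne : enc v ≠ enc w := fun h => hvw (henc h)
    rcases Nat.lt_or_ge (enc v) (enc w) with h | h
    · have : ((enc v : ℝ)) + 1 ≤ (enc w : ℝ) := by exact_mod_cast h
      linarith [hxv.2, hxw.1]
    · have h' : enc w < enc v := lt_of_le_of_ne h (Ne.symm hne)
      have : ((enc w : ℝ)) + 1 ≤ (enc v : ℝ) := by exact_mod_cast h'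
      linarith [hxv.1, hxw.2]
  -- the witnesses commute
  have hGfix : ∀ w ∈ Wf, ∀ i, FixesOff (G w i)
      (Set.Ioo ((enc w : ℝ)) ((enc w : ℝ) + 1)) := by
    intro w hw i
    have hw' : w ∈ W := (Set.Finite.mem_toFinset _).mp hw
    exact (hG w hw'.1).2.1 i
  have hcomm : ∀ i : Fin n, (Wf : Set (FreeGroup (Fin n))).Pairwise
      (fun v w => Commute (G v i) (G w i)) := by
    intro i v hv w hw hvw
    have hv' : v ∈ Wf := Finset.mem_coe.mp hv
    have hw' : w ∈ Wf := Finset.mem_coe.mp hw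
    exact commute_of_disjoint (hGfix v hv' i) (hGfix w hw' i) (hdisj v w hvw)
  set a' : Fin n → Equiv.Perm ℝ := fun i => Wf.noncommProd (fun w => G w i) (hcomm i)
    with ha'def
  have ha'H : ∀ i, a' i ∈ H := by
    intro i
    apply Subgroup.noncommProd_mem
    intro w hw
    have hw' : w ∈ W := (Set.Finite.mem_toFinset _).mp hw
    exact (hG w hw'.1).1 i
  -- lift to Thompson's group
  have hpre : ∀ i, ∃ t : ThompsonF, φ t = a' i := fun i => H_le_range (ha'H i)
  choose b hb using hpre
  refine ⟨b, ?_⟩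
  intro w hw1 hwk hcon
  have hwWf : w ∈ Wf := (Set.Finite.mem_toFinset _).mpr ⟨hw1, hwk⟩
  -- the permutation tuple evaluation
  have hφ : φ.comp (FreeGroup.lift b) = FreeGroup.lift a' :=
    FreeGroup.ext_hom _ _ (fun i => by simp [hb i])
  have hlift1 : FreeGroup.lift a' w = 1 := by
    have := congrArg (fun f => f w) hφ
    simp only [MonoidHom.comp_apply] at this
    rw [← this, hcon, map_one]
  -- but the evaluation at the base point moves
  set S := Set.Ioo ((enc w : ℝ)) ((enc w : ℝ) + 1) with hSdef
  have hx0S : ((enc w : ℝ) + 1/3) ∈ S := by constructor <;> norm_num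
  have hagree : ∀ i, ∀ x ∈ S, a' i x = G w i x := by
    intro i x hx
    have := noncommProd_apply_region (fun v => G v i) w S
      (fun y hy => (hGfix w hwWf i).mem hy) Wf (hcomm i)
      (fun v hv hvw y hy => (hGfix v hv i) y (hdisj w v (fun h => hvw h.symm) y hy)) x hx
    rw [ha'def]
    rw [this, if_pos hwWf]
  have hinv1 : ∀ i, ∀ x ∈ S, G w i x ∈ S := fun i x hx => (hGfix w hwWf i).mem hx
  have hinv2 : ∀ i, ∀ x ∈ S, (G w i)⁻¹ x ∈ S := fun i x hx => ((hGfix w hwWf i).inv).mem hx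
  have heval := (eval_agree a' (G w) S hagree hinv1 hinv2 w.toWord
    ((enc w : ℝ) + 1/3) hx0S).1
  have hmove : FreeGroup.lift (G w) w ((enc w : ℝ) + 1/3) ≠ ((enc w : ℝ) + 1/3) :=
    (hG w hw1).2.2
  apply hmove
  rw [lift_eq_prod_app, ← heval, ← lift_eq_prod_app, hlift1]
  rfl
end
end

section
/- For any positive integer k there exists a pair of elements a, b in Thompson's group F such that no nontrivial relation of length less than k is satisfied by a and b. Concretely: for every k : ℕ there exist a b : F such that for every w ∈ FreeGroup (Fin 2) with w ≠ 1 and FreeGroup.norm w < k, evaluating w at (a, b) (via FreeGroup.lift sending the two generators to a and b) does not give the identity of F. -/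
set_option maxHeartbeats 2000000

noncomputable def TX0 : Equiv.Perm ℝ where
  toFun t := t - 1
  invFun t := t + 1
  left_inv t := by ring
  right_inv t := by ring

noncomputable def TX1 : Equiv.Perm ℝ where
  toFun t := if t ≤ 0 then t else if t ≤ 2 then t / 2 else t - 1
  invFun t := if t ≤ 0 then t else if t ≤ 1 then 2 * t else t + 1
  left_inv t := by simp only; split_ifs <;> linarith
  right_inv t := by simp only; split_ifs <;> linarith

lemma TX0_apply (t : ℝ) : TX0 t = t - 1 := rfl
lemma TX0_inv_apply (t : ℝ) : TX0⁻¹ t = t + 1 := rfl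
lemma TX1_apply (t : ℝ) : TX1 t = if t ≤ 0 then t else if t ≤ 2 then t / 2 else t - 1 := rfl
lemma TX1_inv_apply (t : ℝ) :
    TX1⁻¹ t = if t ≤ 0 then t else if t ≤ 1 then 2 * t else t + 1 := rfl

/-- the up-bump supported on (0,3) -/
noncomputable def TU : Equiv.Perm ℝ where
  toFun t := if t ≤ 0 then t else if t ≤ 1 then 2 * t else if t ≤ 3 then (t + 3) / 2 else t
  invFun t := if t ≤ 0 then t else if t ≤ 2 then t / 2 else if t ≤ 3 then 2 * t - 3 else t
  left_inv t := by simp only; split_ifs <;> linarith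
  right_inv t := by simp only; split_ifs <;> linarith

lemma TU_apply (t : ℝ) :
    TU t = if t ≤ 0 then t else if t ≤ 1 then 2 * t else if t ≤ 3 then (t + 3) / 2 else t := rfl

lemma TU_eq_word : TU = (TX1 * (TX0⁻¹ ^ 2 * TX1 * TX0 ^ 2)⁻¹)⁻¹ := by
  have h2 : (TX0 : Equiv.Perm ℝ) ^ 2 = TX0 * TX0 := sq TX0
  have h2' : (TX0⁻¹ : Equiv.Perm ℝ) ^ 2 = TX0⁻¹ * TX0⁻¹ := sq _
  rw [eq_comm, inv_eq_iff_eq_inv, eq_comm]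
  ext t
  rw [mul_inv_rev, h2, h2']
  simp only [mul_inv_rev, inv_inv, Equiv.Perm.mul_apply, TX0_apply, TX0_inv_apply, TX1_apply,
    TX1_inv_apply]
  simp only [TU, Equiv.Perm.inv_def, Equiv.coe_fn_symm_mk]
  split_ifs <;> linarith

-- dynamics of TU
lemma TU_pow3 : (TU : Equiv.Perm ℝ) ^ 3 = TU * TU * TU := by
  rw [pow_succ, pow_two]

lemma TU_on1 {t : ℝ} (h0 : 0 < t) (h1 : t ≤ 1) : TU t = 2 * t := by
  rw [TU_apply]; split_ifs <;> linarith

lemma TU_on2 {t : ℝ} (h1 : 1 ≤ t) (h3 : t ≤ 3) : TU t = (t + 3) / 2 := by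
  rw [TU_apply]; split_ifs <;> linarith

lemma TU_fix {t : ℝ} (h : t ≤ 0 ∨ 3 ≤ t) : TU t = t := by
  rw [TU_apply]; rcases h with h | h <;> split_ifs <;> linarith

lemma TU3_fix {t : ℝ} (h : t ≤ 0 ∨ 3 ≤ t) : (TU ^ 3) t = t := by
  rw [TU_pow3]
  simp only [Equiv.Perm.mul_apply]
  rw [TU_fix h, TU_fix h, TU_fix h]

lemma TU3_inv_fix {t : ℝ} (h : t ≤ 0 ∨ 3 ≤ t) : ((TU ^ 3)⁻¹) t = t := by
  have h2 := TU3_fix h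
  calc ((TU ^ 3)⁻¹) t = ((TU ^ 3)⁻¹) ((TU ^ 3) t) := by rw [h2]
  _ = t := by simp

lemma TU3_entry {t : ℝ} (h : t ∈ Set.Ico (0.5 : ℝ) 1) :
    (TU ^ 3) t ∈ Set.Ico (2.5 : ℝ) 3 := by
  obtain ⟨h1, h2⟩ := h
  rw [TU_pow3]
  simp only [Equiv.Perm.mul_apply]
  have e1 : TU t = 2 * t := TU_on1 (by linarith) (by linarith)
  have e2 : TU (2 * t) = (2 * t + 3) / 2 := TU_on2 (by linarith) (by linarith)
  have e3 : TU ((2 * t + 3) / 2) = ((2 * t + 3) / 2 + 3) / 2 :=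
    TU_on2 (by linarith) (by linarith)
  rw [e1, e2, e3]
  constructor <;> linarith

lemma TU3_exitzone {t : ℝ} (h : t ∈ Set.Ico (2.5 : ℝ) 3) :
    (TU ^ 3) t ∈ Set.Ico (2.5 : ℝ) 3 := by
  obtain ⟨h1, h2⟩ := h
  rw [TU_pow3]
  simp only [Equiv.Perm.mul_apply]
  have e1 : TU t = (t + 3) / 2 := TU_on2 (by linarith) (by linarith)
  have e2 : TU ((t + 3) / 2) = ((t + 3) / 2 + 3) / 2 := TU_on2 (by linarith) (by linarith)
  have e3 : TU (((t + 3) / 2 + 3) / 2) = (((t + 3) / 2 + 3) / 2 + 3) / 2 :=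
    TU_on2 (by linarith) (by linarith)
  rw [e1, e2, e3]
  constructor <;> linarith

lemma Trel1 : (TX0 * TX1⁻¹) * (TX0⁻¹ * TX1 * TX0) = (TX0⁻¹ * TX1 * TX0) * (TX0 * TX1⁻¹) := by
  ext t
  simp only [Equiv.Perm.mul_apply, TX0_apply, TX0_inv_apply, TX1_apply, TX1_inv_apply]
  split_ifs <;> linarith

lemma Trel2 : (TX0 * TX1⁻¹) * (TX0⁻¹ ^ 2 * TX1 * TX0 ^ 2) =
    (TX0⁻¹ ^ 2 * TX1 * TX0 ^ 2) * (TX0 * TX1⁻¹) := by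
  have h2 : (TX0 : Equiv.Perm ℝ) ^ 2 = TX0 * TX0 := sq TX0
  have h2' : (TX0⁻¹ : Equiv.Perm ℝ) ^ 2 = TX0⁻¹ * TX0⁻¹ := sq _
  rw [h2, h2']
  ext t
  simp only [Equiv.Perm.mul_apply, TX0_apply, TX0_inv_apply, TX1_apply, TX1_inv_apply]
  split_ifs <;> linarith


open scoped commutatorElement

noncomputable def TXf : Fin 2 → Equiv.Perm ℝ := ![TX0, TX1]

lemma Trels_hold : ∀ r ∈ thompsonRels, FreeGroup.lift TXf r = 1 := by
  intro r hr
  rcases hr with h | h <;> subst h <;>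
    simp only [map_commutatorElement, map_mul, map_inv, map_pow, FreeGroup.lift_apply_of, TXf,
      Matrix.cons_val_zero, Matrix.cons_val_one, Matrix.head_cons,
      commutatorElement_eq_one_iff_mul_comm]
  · exact Trel1
  · exact Trel2

noncomputable def Tphi : ThompsonF →* Equiv.Perm ℝ := PresentedGroup.toGroup Trels_hold

lemma Tphi_of (i : Fin 2) : Tphi (PresentedGroup.of i) = TXf i := PresentedGroup.toGroup.of _

/-- component permutation at window `a` with sign `σ` -/
noncomputable def Cperm (p : ℕ × Bool) : Equiv.Perm ℝ :=
  TX0⁻¹ ^ p.1 * (cond p.2 (TU ^ 3) (TU ^ 3)⁻¹) * TX0 ^ p.1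

/-- corresponding element in ThompsonF -/
def y0 : ThompsonF := PresentedGroup.of 0
def y1 : ThompsonF := PresentedGroup.of 1
def yU : ThompsonF := (y1 * (y0⁻¹ ^ 2 * y1 * y0 ^ 2)⁻¹)⁻¹
def Chat (p : ℕ × Bool) : ThompsonF := y0⁻¹ ^ p.1 * (cond p.2 (yU ^ 3) (yU ^ 3)⁻¹) * y0 ^ p.1

lemma Tphi_yU : Tphi yU = TU := by
  rw [TU_eq_word]
  simp only [yU, y0, y1, map_inv, map_mul, map_pow, Tphi_of, TXf,
    Matrix.cons_val_zero, Matrix.cons_val_one, Matrix.head_cons]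

lemma Tphi_Chat (p : ℕ × Bool) : Tphi (Chat p) = Cperm p := by
  cases p with
  | mk a σ =>
    cases σ <;>
      simp only [Chat, Cperm, cond, map_mul, map_inv, map_pow, Tphi_of, Tphi_yU, y0, TXf,
        Matrix.cons_val_zero]

-- shift powers
lemma TX0_pow_apply (a : ℕ) (t : ℝ) : (TX0 ^ a) t = t - a := by
  induction a generalizing t with
  | zero => simp
  | succ n ih =>
    rw [pow_succ, Equiv.Perm.mul_apply, TX0_apply, ih]
    push_cast; ring

lemma TX0_inv_pow_apply (a : ℕ) (t : ℝ) : (TX0⁻¹ ^ a) t = t + a := by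
  induction a generalizing t with
  | zero => simp
  | succ n ih =>
    rw [pow_succ, Equiv.Perm.mul_apply, TX0_inv_apply, ih]
    push_cast; ring

lemma Cperm_apply (a : ℕ) (σ : Bool) (t : ℝ) :
    Cperm (a, σ) t = (cond σ (TU ^ 3) (TU ^ 3)⁻¹) (t - a) + a := by
  simp only [Cperm, Equiv.Perm.mul_apply, TX0_pow_apply, TX0_inv_pow_apply]

lemma Cperm_fix {a : ℕ} {σ : Bool} {t : ℝ} (h : t ∉ Set.Ioo (a : ℝ) (a + 3)) :
    Cperm (a, σ) t = t := by
  rw [Cperm_apply]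
  have h' : t - a ≤ 0 ∨ 3 ≤ t - a := by
    simp only [Set.mem_Ioo, not_and, not_lt] at h
    rcases le_or_gt t a with h1 | h1
    · left; linarith
    · right; have := h h1; linarith
  cases σ
  · simp only [cond]; rw [TU3_inv_fix h']; ring
  · simp only [cond]; rw [TU3_fix h']; ring

lemma Cperm_inv (a : ℕ) (σ : Bool) : (Cperm (a, σ))⁻¹ = Cperm (a, !σ) := by
  cases σ <;>
    simp only [Cperm, cond, mul_inv_rev, inv_inv, inv_pow, Bool.not_true, Bool.not_false,
      mul_assoc]

abbrev TP := Fin 2 × Bool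

def pidx (p : TP) : ℕ := 2 * p.1.val + cond p.2 1 0

def pdec (m : ℕ) : TP := (if m / 2 % 2 = 1 then 1 else 0, m % 2 = 1)

lemma pdec_pidx (p : TP) : pdec (pidx p) = p := by
  revert p; decide

lemma pidx_lt (p : TP) : pidx p < 4 := by
  revert p; decide

def myEnc : List TP → ℕ
  | [] => 0
  | p :: l => 1 + pidx p + 5 * myEnc l

def myDec : ℕ → List TP
  | 0 => []
  | n + 1 => pdec (n % 5) :: myDec (n / 5)
decreasing_by exact Nat.lt_succ_of_le (Nat.div_le_self n 5)

lemma myDec_myEnc (l : List TP) : myDec (myEnc l) = l := by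
  induction l with
  | nil => simp [myEnc, myDec]
  | cons p l ih =>
    show myDec (1 + pidx p + 5 * myEnc l) = p :: l
    have h1 : 1 + pidx p + 5 * myEnc l = (pidx p + 5 * myEnc l) + 1 := by ring
    rw [h1, myDec]
    have h4 := pidx_lt p
    have h2 : (pidx p + 5 * myEnc l) % 5 = pidx p := by omega
    have h3 : (pidx p + 5 * myEnc l) / 5 = myEnc l := by omega
    rw [h2, h3, pdec_pidx, ih]

lemma myEnc_lt (l : List TP) : myEnc l < 5 ^ l.length := by
  induction l with
  | nil => simp [myEnc]
  | cons p l ih =>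
    show 1 + pidx p + 5 * myEnc l < 5 ^ (l.length + 1)
    have h4 := pidx_lt p
    have : 5 ^ (l.length + 1) = 5 * 5 ^ l.length := by ring
    omega

lemma myDec_length_le {n j : ℕ} (h : n < 5 ^ j) : (myDec n).length ≤ j := by
  induction j generalizing n with
  | zero => simp at h; subst h; simp [myDec]
  | succ j ih =>
    cases n with
    | zero => simp [myDec]
    | succ m =>
      rw [myDec]
      simp only [List.length_cons]
      have : m / 5 < 5 ^ j := by
        have := Nat.pow_succ 5 j
        omega
      exact Nat.succ_le_succ (ih this)

/-- collapse adjacent equal letters -/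
def sigA (last : TP) : List TP → List TP
  | [] => []
  | q :: l => if q = last then sigA last l else q :: sigA q l

def sig : List TP → List TP
  | [] => []
  | p :: l => p :: sigA p l

lemma sigA_length_le (last : TP) (l : List TP) : (sigA last l).length ≤ l.length := by
  induction l generalizing last with
  | nil => simp [sigA]
  | cons q l ih =>
    rw [sigA]
    split_ifs
    · exact (ih last).trans (Nat.le_succ _)
    · simpa using Nat.succ_le_succ (ih q)

lemma sig_length_le (l : List TP) : (sig l).length ≤ l.length := by
  cases l with
  | nil => simp [sig]
  | cons p l => simpa [sig] using Nat.succ_le_succ (sigA_length_le p l)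

lemma sigA_append (last : TP) (l : List TP) (p : TP) :
    sigA last (l ++ [p]) =
      sigA last l ++ (if p = l.getLastD last then [] else [p]) := by
  induction l generalizing last with
  | nil =>
    simp [sigA]
  | cons q l ih =>
    simp only [List.cons_append, sigA, List.getLastD_cons, List.append_eq]
    by_cases h : q = last
    · subst h
      simp only [if_pos rfl]
      exact ih q
    · simp only [if_neg h]
      rw [ih q]
      simp

/-- non-cancelling adjacent pairs -/
def NC (p q : TP) : Prop := ¬(p.1 = q.1 ∧ p.2 = !q.2)

instance : DecidableRel NC := fun p q => by unfold NC; infer_instance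

lemma NC_flip {p q : TP} (h : NC p q) : NC q p := by
  revert h; unfold NC
  rcases p with ⟨i, b⟩; rcases q with ⟨j, c⟩
  simp only [not_and]
  intro h hji
  subst hji
  cases b <;> cases c <;> simp_all

lemma NC_ne_letter {p q : TP} (h : NC p q) (hne : p ≠ q) : p.1 ≠ q.1 := by
  rcases p with ⟨i, b⟩; rcases q with ⟨j, c⟩
  intro hij
  simp only at hij
  subst hij
  apply hne
  unfold NC at h
  simp only [true_and, not_and] at h
  cases b <;> cases c <;> simp_all

lemma reduce_eq_chain : ∀ {L : List TP}, FreeGroup.reduce L = L → List.IsChain NC L := by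
  intro L
  induction L with
  | nil => intro _; simp
  | cons p L ih =>
    intro h
    rw [FreeGroup.reduce.cons] at h
    cases hrl : FreeGroup.reduce L with
    | nil =>
      rw [hrl] at h
      simp only at h
      have : [] = L := by injection h
      subst this
      simp
    | cons q t =>
      rw [hrl] at h
      simp only at h
      split_ifs at h with hc
      · exfalso
        have hle : (FreeGroup.reduce L).length ≤ L.length :=
          FreeGroup.Red.length_le FreeGroup.reduce.red
        rw [hrl] at hle
        have := congrArg List.length h
        simp at this
        simp at hle
        omega
      · have hL : L = q :: t := by
          injection h with _ h2
          exact h2.symm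
        have hred : FreeGroup.reduce L = L := by rw [hrl, hL]
        have hch := ih hred
        rw [hL]
        exact List.isChain_cons_cons.2 ⟨hc, hL ▸ hch⟩

def d0 : TP := (0, true)

lemma sig_append {μ : List TP} (hμ : μ ≠ []) (p : TP) :
    sig (μ ++ [p]) = sig μ ++ (if p = μ.getLastD d0 then [] else [p]) := by
  cases μ with
  | nil => exact absurd rfl hμ
  | cons r l =>
    simp only [List.cons_append, sig, List.getLastD_cons, sigA_append]

lemma sigA_getLastD : ∀ (l : List TP) (last : TP) (d : TP),
    (last :: sigA last l).getLastD d = l.getLastD last := by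
  intro l
  induction l with
  | nil => intro last d; simp [sigA]
  | cons q l ih =>
    intro last d
    rw [sigA]
    split_ifs with h
    · subst h
      have h2 := ih q d
      simp only [List.getLastD_cons] at h2 ⊢
      exact h2
    · have h2 := ih q last
      simp only [List.getLastD_cons] at h2 ⊢
      exact h2

lemma sig_getLastD {μ : List TP} (hμ : μ ≠ []) :
    (sig μ).getLastD d0 = μ.getLastD d0 := by
  cases μ with
  | nil => exact absurd rfl hμ
  | cons r l =>
    have h2 := sigA_getLastD l r d0
    simp only [List.getLastD_cons] at h2 ⊢
    rw [sig]
    simp only [List.getLastD_cons]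
    exact h2

lemma sig_prefix_append (μ ν : List TP) : sig μ <+: sig (μ ++ ν) := by
  induction ν using List.reverseRecOn with
  | nil => simp
  | append_singleton ν p ih =>
    rcases eq_or_ne (μ ++ ν) [] with h | h
    · have h1 : μ = [] := by
        rcases List.append_eq_nil_iff.1 h with ⟨h1, _⟩
        exact h1
      subst h1
      simp [sig]
    · rw [← List.append_assoc, sig_append h]
      exact ih.trans (List.prefix_append _ _)

lemma sig_chainA : ∀ (l : List TP) (last : TP), List.IsChain NC (last :: l) →
    List.IsChain (fun p q : TP => p.1 ≠ q.1) (last :: sigA last l) := by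
  intro l
  induction l with
  | nil => intro last _; simp [sigA]
  | cons q l ih =>
    intro last h
    rw [List.isChain_cons_cons] at h
    obtain ⟨h1, h2⟩ := h
    rw [sigA]
    split_ifs with hq
    · subst hq
      exact ih q h2
    · rw [List.isChain_cons_cons]
      refine ⟨NC_ne_letter h1 (Ne.symm hq), ih q h2⟩

lemma sig_chain {l : List TP} (h : List.IsChain NC l) :
    List.IsChain (fun p q : TP => p.1 ≠ q.1) (sig l) := by
  cases l with
  | nil => simp [sig]
  | cons p l => exact sig_chainA l p h

def compsFor (i : Fin 2) : ℕ → List TP → List (ℕ × Bool)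
  | _, [] => []
  | base, q :: l => (if q.1 = i then [(base, q.2)] else []) ++ compsFor i (base + 2) l

lemma mem_compsFor {i : Fin 2} {x : ℕ × Bool} : ∀ {s : List TP} {base : ℕ},
    x ∈ compsFor i base s ↔
      ∃ j : ℕ, ∃ hj : j < s.length, (s[j]'hj).1 = i ∧ x.1 = base + 2 * j ∧ x.2 = (s[j]'hj).2 := by
  intro s
  induction s with
  | nil => intro base; simp [compsFor]
  | cons q l ih =>
    intro base
    rw [compsFor, List.mem_append, ih]
    constructor
    · rintro (h1 | ⟨j, hj, h1, h2, h3⟩)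
      · split_ifs at h1 with hq
        · simp only [List.mem_singleton] at h1
          refine ⟨0, by simp, by simpa using hq, ?_, ?_⟩
          · rw [h1]; simp
          · rw [h1]; simp
        · simp at h1
      · exact ⟨j + 1, by simpa using hj, by simpa using h1, by omega, by simpa using h3⟩
    · rintro ⟨j, hj, h1, h2, h3⟩
      cases j with
      | zero =>
        left
        simp only [List.getElem_cons_zero] at h1 h3
        rw [if_pos h1]
        simp only [List.mem_singleton]
        rcases x with ⟨xa, xb⟩
        simp only at h2 h3
        simp [h2, h3]
      | succ j =>
        right
        simp only [List.getElem_cons_succ] at h1 h3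
        exact ⟨j, by simpa using hj, h1, by omega, h3⟩

lemma compsFor_fst_lt {i : Fin 2} {x : ℕ × Bool} {base : ℕ} {s : List TP}
    (h : x ∈ compsFor i base s) : base ≤ x.1 ∧ x.1 < base + 2 * s.length := by
  rw [mem_compsFor] at h
  obtain ⟨j, hj, _, h2, _⟩ := h
  omega

lemma compsFor_pairwise (i : Fin 2) : ∀ (s : List TP) (base : ℕ),
    (compsFor i base s).Pairwise (fun a b => a.1 < b.1) := by
  intro s
  induction s with
  | nil => intro base; simp [compsFor]
  | cons q l ih =>
    intro base
    rw [compsFor]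
    rw [List.pairwise_append]
    refine ⟨by split_ifs <;> simp, ih (base + 2), ?_⟩
    intro a ha b hb
    have hb' := (compsFor_fst_lt hb).1
    split_ifs at ha with hq
    · simp only [List.mem_singleton] at ha
      rw [ha]
      omega
    · simp at ha

/-- all window components for generator `i`, across all regions -/
def bigLP (k : ℕ) (i : Fin 2) : List (ℕ × Bool) :=
  (List.range (5 ^ k)).flatMap fun n => compsFor i (n * (2 * k + 4)) (sig (myDec n))

lemma bigLP_mem_bound {k : ℕ} {i : Fin 2} {x : ℕ × Bool} {n : ℕ} (hn : n < 5 ^ k)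
    (hx : x ∈ compsFor i (n * (2 * k + 4)) (sig (myDec n))) :
    n * (2 * k + 4) ≤ x.1 ∧ x.1 < n * (2 * k + 4) + 2 * k := by
  have h1 := compsFor_fst_lt hx
  have h2 : (sig (myDec n)).length ≤ k := (sig_length_le _).trans (myDec_length_le hn)
  rcases h1 with ⟨h1a, h1b⟩
  exact ⟨h1a, by omega⟩

lemma bigLP_nodup (k : ℕ) (i : Fin 2) : ((bigLP k i).map Prod.fst).Nodup := by
  rw [bigLP, List.map_flatMap, List.nodup_flatMap]
  constructor
  · intro n _
    exact List.Pairwise.map Prod.fst (fun {a b} (h : a.1 < b.1) => Nat.ne_of_lt h) (compsFor_pairwise i _ _)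
  · have hpw := List.pairwise_lt_range (n := 5 ^ k)
    refine ((List.Pairwise.and_mem.1 hpw).imp ?_)
    rintro a b ⟨ha, hb, hab⟩
    intro x hxa hxb
    simp only [List.mem_range] at ha hb
    simp only [Function.onFun, List.mem_map] at hxa hxb
    obtain ⟨u, hu, hux⟩ := hxa
    obtain ⟨v, hv, hvx⟩ := hxb
    have h1 := bigLP_mem_bound ha hu
    have h2 := bigLP_mem_bound hb hv
    rw [hux] at h1
    rw [hvx] at h2
    have h3 : (a + 1) * (2 * k + 4) ≤ b * (2 * k + 4) := Nat.mul_le_mul_right _ (by omega)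
    have h4 : (a + 1) * (2 * k + 4) = a * (2 * k + 4) + (2 * k + 4) := by ring
    omega

noncomputable def Fperm (k : ℕ) (i : Fin 2) : Equiv.Perm ℝ := ((bigLP k i).map Cperm).prod

lemma prod_fix (L : List (ℕ × Bool)) (pt : ℝ) (h : ∀ p ∈ L, Cperm p pt = pt) :
    ((L.map Cperm).prod) pt = pt := by
  induction L with
  | nil => simp
  | cons x L ih =>
    simp only [List.map_cons, List.prod_cons, Equiv.Perm.mul_apply]
    rw [ih (fun p hp => h p (List.mem_cons_of_mem _ hp)), h x List.mem_cons_self]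

lemma prod_eval (L : List (ℕ × Bool)) (hnod : (L.map Prod.fst).Nodup) (a : ℕ) (σ : Bool)
    (hmem : (a, σ) ∈ L) (pt : ℝ)
    (hfix : ∀ p ∈ L, p.1 ≠ a → Cperm p pt = pt ∧ Cperm p (Cperm (a, σ) pt) = Cperm (a, σ) pt) :
    ((L.map Cperm).prod) pt = Cperm (a, σ) pt := by
  induction L with
  | nil => simp at hmem
  | cons x L ih =>
    rw [List.map_cons, List.nodup_cons] at hnod
    simp only [List.map_cons, List.prod_cons, Equiv.Perm.mul_apply]
    rcases List.mem_cons.1 hmem with hx | hx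
    · rw [← hx]
      have hfixL : ∀ p ∈ L, Cperm p pt = pt := by
        intro p hp
        have hpa : p.1 ≠ a := by
          intro he
          apply hnod.1
          have : x.1 = p.1 := by rw [← hx, he]
          rw [this]
          exact List.mem_map_of_mem (f := Prod.fst) hp
        exact (hfix p (List.mem_cons_of_mem _ hp) hpa).1
      rw [prod_fix L pt hfixL]
    · have hx1 : x.1 ≠ a := by
        intro he
        apply hnod.1
        rw [he]
        exact List.mem_map_of_mem (f := Prod.fst) hx
      rw [ih hnod.2 hx
        (fun p hp hpa => hfix p (List.mem_cons_of_mem _ hp) hpa)]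
      exact (hfix x List.mem_cons_self hx1).2

def negSnd (p : ℕ × Bool) : ℕ × Bool := (p.1, !p.2)

lemma Fperm_inv (k : ℕ) (i : Fin 2) :
    (Fperm k i)⁻¹ = ((((bigLP k i).reverse.map negSnd)).map Cperm).prod := by
  rw [Fperm, List.prod_inv_reverse]
  congr 1
  rw [List.map_map, ← List.map_reverse (f := ((fun x => x⁻¹) ∘ Cperm)) (l := bigLP k i), List.map_map]
  apply List.map_congr_left
  intro p _
  rcases p with ⟨a, σ⟩
  simp only [Function.comp_apply, negSnd]
  exact Cperm_inv a σ

lemma window_disjoint (k : ℕ) {n J : ℕ} {i : Fin 2} (hn : n < 5 ^ k)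
    (hred : List.IsChain NC (myDec n)) (hJ : J < (sig (myDec n)).length)
    (hJi : ((sig (myDec n))[J]'hJ).1 = i)
    {p : ℕ × Bool} (hp : p ∈ bigLP k i) (hpA : p.1 ≠ n * (2 * k + 4) + 2 * J) :
    p.1 + 3 ≤ n * (2 * k + 4) + 2 * J ∨ n * (2 * k + 4) + 2 * J + 3 ≤ p.1 := by
  rw [bigLP, List.mem_flatMap] at hp
  obtain ⟨m, hm, hpm⟩ := hp
  rw [List.mem_range] at hm
  have hbound := bigLP_mem_bound hm hpm
  have hJk : J < k := lt_of_lt_of_le hJ ((sig_length_le _).trans (myDec_length_le hn))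
  rcases Nat.lt_trichotomy m n with hmn | hmn | hmn
  · left
    have h1 : (m + 1) * (2 * k + 4) ≤ n * (2 * k + 4) := Nat.mul_le_mul_right _ (by omega)
    have h2 : (m + 1) * (2 * k + 4) = m * (2 * k + 4) + (2 * k + 4) := by ring
    omega
  · subst hmn
    rw [mem_compsFor] at hpm
    obtain ⟨j, hj, hji, hjfst, _⟩ := hpm
    have hjJ : j ≠ J := by omega
    -- same-letter windows are at least 2 apart
    have halt := sig_chain hred
    rw [List.isChain_iff_getElem] at halt
    have hne : ∀ (u : ℕ) (hu : u + 1 < (sig (myDec m)).length),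
        ((sig (myDec m))[u]'(by omega)).1 ≠ ((sig (myDec m))[u+1]'hu).1 := by
      intro u hu
      have := halt u (by omega)
      simpa using this
    have hfar : j + 2 ≤ J ∨ J + 2 ≤ j := by
      rcases Nat.lt_or_ge j J with h | h
      · left
        by_contra hcon
        have hjJ1 : j + 1 = J := by omega
        subst hjJ1
        exact hne j (by omega) (hji.trans hJi.symm)
      · right
        have hJj : J < j := by omega
        by_contra hcon
        have hJj1 : J + 1 = j := by omega
        subst hJj1
        exact hne J (by omega) (hJi.trans hji.symm)
    omega
  · right
    have h1 : (n + 1) * (2 * k + 4) ≤ m * (2 * k + 4) := Nat.mul_le_mul_right _ (by omega)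
    have h2 : (n + 1) * (2 * k + 4) = n * (2 * k + 4) + (2 * k + 4) := by ring
    omega

lemma gen_act (k : ℕ) {n J : ℕ} {i : Fin 2} {σ : Bool} (hn : n < 5 ^ k)
    (hred : List.IsChain NC (myDec n))
    (hJ : J < (sig (myDec n)).length)
    (hsig : ((sig (myDec n))[J]'hJ) = (i, σ))
    {pt : ℝ}
    (hpt : pt - (n * (2 * k + 4) + 2 * J : ℕ) ∈
      Set.Ico (0.5 : ℝ) 1 ∪ Set.Ico (2.5 : ℝ) 3) :
    (cond σ (Fperm k i) (Fperm k i)⁻¹) pt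
      = ((n * (2 * k + 4) + 2 * J : ℕ) : ℝ)
          + (TU ^ 3) (pt - ((n * (2 * k + 4) + 2 * J : ℕ) : ℝ)) := by
  set A : ℕ := n * (2 * k + 4) + 2 * J with hA
  -- the moving component
  have hmemA : (A, σ) ∈ compsFor i (n * (2 * k + 4)) (sig (myDec n)) := by
    rw [mem_compsFor]
    exact ⟨J, hJ, by rw [hsig], by omega, by rw [hsig]⟩
  have hmemBig : (A, σ) ∈ bigLP k i := by
    rw [bigLP, List.mem_flatMap]
    exact ⟨n, List.mem_range.2 hn, hmemA⟩
  -- the local dynamics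
  have hU3 : (TU ^ 3) (pt - (A : ℝ)) ∈ Set.Ico (2.5 : ℝ) 3 := by
    rcases hpt with h | h
    · exact Set.Ico_subset_Ico le_rfl (by norm_num) (TU3_entry h)
    · exact TU3_exitzone h
  have hptIoo : pt - (A : ℝ) ∈ Set.Ioo (0 : ℝ) 3 := by
    rcases hpt with ⟨h1, h2⟩ | ⟨h1, h2⟩ <;> constructor <;> linarith
  set q : ℝ := (A : ℝ) + (TU ^ 3) (pt - (A : ℝ)) with hq
  have hCA : Cperm (A, true) pt = q := by
    rw [Cperm_apply]
    simp only [cond]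
    rw [hq]; ring
  -- all other components fix pt and q
  have hfixgen : ∀ p : ℕ × Bool, p ∈ bigLP k i → p.1 ≠ A →
      Cperm p pt = pt ∧ Cperm p q = q := by
    intro p hp hpA
    have hdisj := window_disjoint k hn hred hJ (by rw [hsig]) hp hpA
    have hfix1 : pt ∉ Set.Ioo (p.1 : ℝ) (p.1 + 3) := by
      intro hcon
      obtain ⟨hc1, hc2⟩ := hcon
      obtain ⟨hp1, hp2⟩ := hptIoo
      rcases hdisj with h | h
      · have : (p.1 : ℝ) + 3 ≤ (A : ℝ) := by exact_mod_cast Nat.cast_le.2 h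
        linarith
      · have h' : A + 3 ≤ p.1 := h
        have : (A : ℝ) + 3 ≤ (p.1 : ℝ) := by exact_mod_cast h'
        linarith
    have hfix2 : q ∉ Set.Ioo (p.1 : ℝ) (p.1 + 3) := by
      intro hcon
      obtain ⟨hc1, hc2⟩ := hcon
      obtain ⟨hu1, hu2⟩ := hU3
      rcases hdisj with h | h
      · have : (p.1 : ℝ) + 3 ≤ (A : ℝ) := by exact_mod_cast Nat.cast_le.2 h
        rw [hq] at hc1
        linarith
      · have h' : A + 3 ≤ p.1 := h
        have : (A : ℝ) + 3 ≤ (p.1 : ℝ) := by exact_mod_cast h'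
        rw [hq] at hc2
        linarith
    rcases p with ⟨pa, pσ⟩
    exact ⟨Cperm_fix hfix1, Cperm_fix hfix2⟩
  cases σ with
  | true =>
    simp only [cond]
    rw [Fperm]
    rw [prod_eval (bigLP k i) (bigLP_nodup k i) A true hmemBig pt
      (fun p hp hpA => by
        obtain ⟨h1, h2⟩ := hfixgen p hp hpA
        rw [hCA]
        exact ⟨h1, h2⟩)]
    rw [hCA]
  | false =>
    simp only [cond]
    rw [Fperm_inv]
    have hmemM : (A, true) ∈ (bigLP k i).reverse.map negSnd := by
      rw [List.mem_map]
      exact ⟨(A, false), List.mem_reverse.2 hmemBig, rfl⟩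
    have hnodM : (((bigLP k i).reverse.map negSnd).map Prod.fst).Nodup := by
      rw [List.map_map]
      have : (Prod.fst ∘ negSnd) = (Prod.fst : ℕ × Bool → ℕ) := by
        funext p; rfl
      rw [this, List.map_reverse, List.nodup_reverse]
      exact bigLP_nodup k i
    rw [prod_eval _ hnodM A true hmemM pt
      (fun p hp hpA => by
        rw [List.mem_map] at hp
        obtain ⟨p', hp', hpp⟩ := hp
        have hp'A : p'.1 ≠ A := by
          intro he
          apply hpA
          rw [← hpp, negSnd, he]
        obtain ⟨h1, h2⟩ := hfixgen p' (List.mem_reverse.1 hp') hp'A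
        rcases p' with ⟨pa, pσ⟩
        rw [← hpp]
        simp only [negSnd]
        rw [hCA]
        constructor
        · rw [← Cperm_inv]
          have : pt = Cperm (pa, pσ) pt := h1.symm
          conv_lhs => rw [this]
          simp
        · rw [← Cperm_inv]
          have : q = Cperm (pa, pσ) q := h2.symm
          conv_lhs => rw [this]
          simp)]
    rw [hCA]

lemma glastD_getElem {l : List TP} (h : l ≠ []) :
    l.getLastD d0 = l[l.length - 1]'(by
      have := List.length_pos_iff.2 h
      omega) := by
  cases l with
  | nil => exact absurd rfl h
  | cons a l =>
    rw [List.getLastD_cons, ← List.getLast_eq_getLastD (a := a) (l := l) (by simp),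
      List.getLast_eq_getElem]

noncomputable def stepFn (k : ℕ) : ℝ → TP → ℝ :=
  fun s p => (cond p.2 (Fperm k p.1) (Fperm k p.1)⁻¹) s

lemma walk (k : ℕ) {n : ℕ} (hn : n < 5 ^ k) (hred : List.IsChain NC (myDec n)) :
    ∀ (rest μ : List TP) (pt : ℝ), myDec n = μ ++ rest → μ ≠ [] →
      (2.5 ≤ pt - ((n * (2 * k + 4) + 2 * ((sig μ).length - 1) : ℕ) : ℝ) ∧
        pt - ((n * (2 * k + 4) + 2 * ((sig μ).length - 1) : ℕ) : ℝ) < 3) →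
      2.5 ≤ List.foldl (stepFn k) pt rest
            - ((n * (2 * k + 4) + 2 * ((sig (myDec n)).length - 1) : ℕ) : ℝ) ∧
      List.foldl (stepFn k) pt rest
            - ((n * (2 * k + 4) + 2 * ((sig (myDec n)).length - 1) : ℕ) : ℝ) < 3 := by
  intro rest
  induction rest with
  | nil =>
    intro μ pt hsplit hμ hz
    rw [List.append_nil] at hsplit
    rw [hsplit]
    simpa using hz
  | cons p rest ih =>
    intro μ pt hsplit hμ hz
    have hsig_ne : sig μ ≠ [] := by
      cases μ with
      | nil => exact absurd rfl hμ
      | cons a l => simp [sig]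
    have hlenpos : 0 < (sig μ).length := List.length_pos_iff.2 hsig_ne
    have hpre : sig μ <+: sig (myDec n) := by
      rw [hsplit]; exact sig_prefix_append μ (p :: rest)
    have hprelen := hpre.length_le
    have hsplit' : myDec n = (μ ++ [p]) ++ rest := by rw [hsplit]; simp
    rw [List.foldl_cons]
    by_cases hp : p = μ.getLastD d0
    · -- same run
      have hsig' : sig (μ ++ [p]) = sig μ := by
        rw [sig_append hμ p, if_pos hp, List.append_nil]
      have hJ : (sig μ).length - 1 < (sig (myDec n)).length := by omega
      have hsigJ : ((sig (myDec n))[(sig μ).length - 1]'hJ) = (p.1, p.2) := by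
        rw [← hpre.getElem (by omega)]
        have h1 : (sig μ)[(sig μ).length - 1]'(by omega) = (sig μ).getLastD d0 :=
          (glastD_getElem hsig_ne).symm
        rw [h1, sig_getLastD hμ, ← hp]
      have hstep := gen_act k hn hred hJ hsigJ (pt := pt)
        ((Set.mem_union _ _ _).2 (Or.inr (Set.mem_Ico.2 ⟨hz.1, hz.2⟩)))
      have hzone := TU3_exitzone (Set.mem_Ico.2 ⟨hz.1, hz.2⟩)
      rw [Set.mem_Ico] at hzone
      have hstep' : stepFn k pt p =
          ((n * (2 * k + 4) + 2 * ((sig μ).length - 1) : ℕ) : ℝ)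
            + (TU ^ 3) (pt - ((n * (2 * k + 4) + 2 * ((sig μ).length - 1) : ℕ) : ℝ)) := by
        rw [stepFn]
        exact hstep
      have := ih (μ ++ [p]) (stepFn k pt p) hsplit' (by simp)
        (by
          rw [hsig', hstep']
          constructor
          · linarith [hzone.1]
          · linarith [hzone.2])
      exact this
    · -- new run
      have hsig' : sig (μ ++ [p]) = sig μ ++ [p] := by
        rw [sig_append hμ p, if_neg hp]
      have hJ1 : (sig μ).length < (sig (μ ++ [p])).length := by
        rw [hsig']; simp
      have hpre' : sig (μ ++ [p]) <+: sig (myDec n) := by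
        rw [hsplit']; exact sig_prefix_append _ rest
      have hJ : (sig μ).length < (sig (myDec n)).length :=
        lt_of_lt_of_le hJ1 hpre'.length_le
      have hJ1' : (sig μ).length < (sig (μ ++ [p])).length := hJ1
      have hsigJ : ((sig (myDec n))[(sig μ).length]'hJ) = (p.1, p.2) := by
        rw [← hpre'.getElem hJ1']
        exact (List.getElem_of_eq hsig' hJ1').trans
          ((List.getElem_concat_length rfl _).trans Prod.mk.eta.symm)
      have hcast : ((n * (2 * k + 4) + 2 * (sig μ).length : ℕ) : ℝ)
          = ((n * (2 * k + 4) + 2 * ((sig μ).length - 1) : ℕ) : ℝ) + 2 := by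
        have h1 : (sig μ).length = ((sig μ).length - 1) + 1 := by omega
        rw [h1]
        push_cast
        ring
      have hz' : pt - ((n * (2 * k + 4) + 2 * (sig μ).length : ℕ) : ℝ) ∈
          Set.Ico (0.5 : ℝ) 1 := by
        rw [Set.mem_Ico, hcast]
        refine ⟨by linarith [hz.1], by linarith [hz.2]⟩
      have hstep := gen_act k hn hred hJ hsigJ (pt := pt)
        ((Set.mem_union _ _ _).2 (Or.inl hz'))
      have hzone := TU3_entry hz'
      rw [Set.mem_Ico] at hzone
      have hstep' : stepFn k pt p =
          ((n * (2 * k + 4) + 2 * (sig μ).length : ℕ) : ℝ)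
            + (TU ^ 3) (pt - ((n * (2 * k + 4) + 2 * (sig μ).length : ℕ) : ℝ)) := by
        rw [stepFn]
        exact hstep
      have := ih (μ ++ [p]) (stepFn k pt p) hsplit' (by simp)
        (by
          rw [hsig']
          have hlen' : (sig μ ++ [p]).length - 1 = (sig μ).length := by simp
          rw [hlen', hstep']
          constructor
          · linarith [hzone.1]
          · linarith [hzone.2])
      exact this

lemma word_moves (k : ℕ) {L : List TP} (hL : L ≠ []) (hlen : L.length < k)
    (hred : List.IsChain NC L) :
    L.foldl (stepFn k) ((((myEnc L) * (2 * k + 4) : ℕ) : ℝ) + 0.5)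
      ≠ (((myEnc L) * (2 * k + 4) : ℕ) : ℝ) + 0.5 := by
  have hn : myEnc L < 5 ^ k :=
    lt_of_lt_of_le (myEnc_lt L) (Nat.pow_le_pow_right (by norm_num) hlen.le)
  have hdec : myDec (myEnc L) = L := myDec_myEnc L
  have hred' : List.IsChain NC (myDec (myEnc L)) := by rw [hdec]; exact hred
  set n := myEnc L with hn_def
  obtain ⟨p, rest, hPL⟩ : ∃ p rest, L = p :: rest := by
    cases L with
    | nil => exact absurd rfl hL
    | cons p rest => exact ⟨p, rest, rfl⟩
  set pt₀ : ℝ := ((n * (2 * k + 4) : ℕ) : ℝ) + 0.5 with hpt₀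
  have hsiglen : 0 < (sig (myDec n)).length := by
    rw [hdec, hPL]
    simp [sig]
  have hsig0 : ((sig (myDec n))[0]'hsiglen) = (p.1, p.2) := by
    have e := List.getElem_of_eq (congrArg sig (hdec.trans hPL)) hsiglen
    rw [e]
    simp [sig]
  have hcast0 : ((n * (2 * k + 4) + 2 * 0 : ℕ) : ℝ) = ((n * (2 * k + 4) : ℕ) : ℝ) := by
    norm_num
  have hz0 : pt₀ - ((n * (2 * k + 4) + 2 * 0 : ℕ) : ℝ) ∈ Set.Ico (0.5 : ℝ) 1 := by
    rw [hcast0, hpt₀]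
    rw [Set.mem_Ico]
    constructor <;> norm_num
  have hstep := gen_act k hn hred' hsiglen hsig0
    ((Set.mem_union _ _ _).2 (Or.inl hz0))
  have hzone := TU3_entry hz0
  rw [Set.mem_Ico] at hzone
  have hwalk := walk k hn hred' rest [p] (stepFn k pt₀ p)
    (by rw [hdec, hPL]; rfl)
    (by simp)
    (by
      have hsigp : sig [p] = [p] := by simp [sig, sigA]
      rw [hsigp]
      simp only [List.length_singleton]
      have hstep' : stepFn k pt₀ p =
          ((n * (2 * k + 4) + 2 * 0 : ℕ) : ℝ)
            + (TU ^ 3) (pt₀ - ((n * (2 * k + 4) + 2 * 0 : ℕ) : ℝ)) := hstep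
      rw [hstep']
      constructor
      · linarith [hzone.1]
      · linarith [hzone.2])
  rw [hPL, List.foldl_cons]
  intro hcon
  obtain ⟨hw1, hw2⟩ := hwalk
  have hge : ((n * (2 * k + 4) : ℕ) : ℝ)
      ≤ ((n * (2 * k + 4) + 2 * ((sig (myDec n)).length - 1) : ℕ) : ℝ) := by
    exact_mod_cast Nat.le_add_right _ _
  rw [hcon] at hw1
  rw [hpt₀] at hw1
  linarith

noncomputable def aT (k : ℕ) : ThompsonF := ((bigLP k 0).map Chat).prod
noncomputable def bT (k : ℕ) : ThompsonF := ((bigLP k 1).map Chat).prod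

lemma Tphi_aT (k : ℕ) (i : Fin 2) : Tphi (((bigLP k i).map Chat).prod) = Fperm k i := by
  rw [map_list_prod, List.map_map, Fperm]
  congr 1
  apply List.map_congr_left
  intro p _
  exact Tphi_Chat p

lemma lift_comm (k : ℕ) (g : FreeGroup (Fin 2)) :
    Tphi (FreeGroup.lift ![aT k, bT k] g) = FreeGroup.lift (fun i => Fperm k i) g := by
  have h : Tphi.comp (FreeGroup.lift ![aT k, bT k])
      = FreeGroup.lift (fun i => Fperm k i) := by
    apply FreeGroup.ext_hom
    intro x
    simp only [MonoidHom.comp_apply, FreeGroup.lift_apply_of]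
    fin_cases x
    · exact Tphi_aT k 0
    · exact Tphi_aT k 1
  exact DFunLike.congr_fun h g

lemma prodmap_apply (f : Fin 2 → Equiv.Perm ℝ) : ∀ (L : List TP) (t : ℝ),
    ((L.map fun x => bif x.2 then f x.1 else (f x.1)⁻¹).prod) t
      = L.reverse.foldl (fun s p => (cond p.2 (f p.1) (f p.1)⁻¹) s) t := by
  intro L
  induction L with
  | nil => intro t; simp
  | cons p L ih =>
    intro t
    simp only [List.map_cons, List.prod_cons, Equiv.Perm.mul_apply, List.reverse_cons,
      List.foldl_append, List.foldl_cons, List.foldl_nil]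
    rw [ih t]

/-- For any `k` there is a pair of elements of Thompson's group `F` satisfying no
nontrivial relation of length less than `k`. -/
theorem thompson_pair_no_short_relation (k : ℕ) :
    ∃ a b : ThompsonF, ∀ w : FreeGroup (Fin 2), w ≠ 1 → FreeGroup.norm w < k →
      FreeGroup.lift ![a, b] w ≠ 1 := by
  refine ⟨aT k, bT k, ?_⟩
  intro w hw hnorm hcon
  have h1 : FreeGroup.lift (fun i => Fperm k i) w = 1 := by
    rw [← lift_comm k w, hcon, map_one]
  set L : List TP := w.toWord.reverse with hLdef
  have hL : L ≠ [] := by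
    rw [hLdef]
    simp only [ne_eq, List.reverse_eq_nil_iff]
    rw [FreeGroup.toWord_eq_nil_iff]
    exact hw
  have hlen : L.length < k := by
    rw [hLdef, List.length_reverse]
    exact hnorm
  have hred : List.IsChain NC L := by
    rw [hLdef]
    rw [List.isChain_reverse]
    exact (reduce_eq_chain (FreeGroup.reduce_toWord w)).imp (fun a b h => NC_flip h)
  have hmoves := word_moves k hL hlen hred
  apply hmoves
  have h2 : FreeGroup.lift (fun i => Fperm k i) (FreeGroup.mk w.toWord) = 1 := by
    rw [FreeGroup.mk_toWord]
    exact h1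
  rw [FreeGroup.lift_mk] at h2
  have h3 := congrArg (fun (π : Equiv.Perm ℝ) =>
    π ((((myEnc L) * (2 * k + 4) : ℕ) : ℝ) + 0.5)) h2
  rw [prodmap_apply] at h3
  rw [← hLdef] at h3
  rw [Equiv.Perm.one_apply] at h3
  exact h3
end

section
/- Let G be a finitely generated group and n a positive integer. Then the following are equivalent: (1) for every positive integer k there exist n elements a₁, …, aₙ of G such that no nontrivial word in FreeGroup (Fin n) of length less than k evaluates to the identity at (a₁, …, aₙ); (2) G satisfies no identity in n variables, i.e. there is no nontrivial w ∈ FreeGroup (Fin n) such that FreeGroup.lift a sends w to 1 for every a : Fin n → G. -/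
/-- Distinct generators of a free group do not commute. -/
private lemma freeGroup_of_not_commute {β : Type*} {a b : β} (h : a ≠ b) :
    ¬ Commute (FreeGroup.of a) (FreeGroup.of b) := by
  have hswap : ¬ Commute (Equiv.swap (0 : Fin 3) 1) (Equiv.swap (1 : Fin 3) 2) := by
    intro h
    have h2 := congrArg (fun p : Equiv.Perm (Fin 3) => p 2) h
    simp [Equiv.Perm.mul_apply, Equiv.swap_apply_def] at h2
  classical
  intro hc
  set f : β → Equiv.Perm (Fin 3) := fun x =>
    if x = a then Equiv.swap (0 : Fin 3) 1 else if x = b then Equiv.swap (1 : Fin 3) 2 else 1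
    with hf
  have hfa : FreeGroup.lift f (FreeGroup.of a) = Equiv.swap (0 : Fin 3) 1 := by
    rw [FreeGroup.lift_apply_of, hf]; simp
  have hfb : FreeGroup.lift f (FreeGroup.of b) = Equiv.swap (1 : Fin 3) 2 := by
    rw [FreeGroup.lift_apply_of, hf]; simp [Ne.symm h]
  have h2 := hc.map (FreeGroup.lift f)
  rw [hfa, hfb] at h2
  exact hswap h2

/-- Two commuting nontrivial elements of a free group have a common nontrivial power. -/
private lemma exists_ne_one_mem_zpowers {α : Type*} {u v : FreeGroup α}
    (hu : u ≠ 1) (hv : v ≠ 1) (hc : Commute u v) :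
    ∃ z : FreeGroup α, z ≠ 1 ∧ z ∈ Subgroup.zpowers u ∧ z ∈ Subgroup.zpowers v := by
  classical
  set H : Subgroup (FreeGroup α) := Subgroup.closure {u, v} with hH
  have hucl : u ∈ H := Subgroup.subset_closure (by simp)
  have hvcl : v ∈ H := Subgroup.subset_closure (by simp)
  letI : CommGroup H := Subgroup.closureCommGroupOfComm (k := {u, v}) (by
    rintro x hx y hy
    simp only [Set.mem_insert_iff, Set.mem_singleton_iff] at hx hy
    rcases hx with rfl | rfl <;> rcases hy with rfl | rfl
    · rfl
    · exact hc
    · exact hc.symm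
    · rfl)
  haveI : IsFreeGroup H := inferInstance
  set β := IsFreeGroup.Generators H
  set e : H ≃* FreeGroup β := IsFreeGroup.toFreeGroup H
  -- the generating set of the free group H is a subsingleton
  haveI hsub : Subsingleton β := by
    by_contra hns
    rw [not_subsingleton_iff_nontrivial] at hns
    obtain ⟨x, y, hxy⟩ := hns
    apply freeGroup_of_not_commute hxy
    have : Commute (e.symm (FreeGroup.of x)) (e.symm (FreeGroup.of y)) := mul_comm _ _
    have := this.map e.toMonoidHom
    simpa using this
  -- β is nonempty, since H contains the nontrivial element u
  have hβ : Nonempty β := by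
    by_contra hne
    rw [not_nonempty_iff] at hne
    have htriv : ∀ g : FreeGroup β, g = 1 := by
      intro g
      rw [← FreeGroup.toWord_eq_nil_iff]
      cases hg : g.toWord with
      | nil => rfl
      | cons p t => exact hne.elim p.1
    apply hu
    have h1 : (⟨u, hucl⟩ : H) = 1 := e.injective (by rw [map_one]; exact htriv _)
    exact congrArg Subtype.val h1
  obtain ⟨b⟩ := hβ
  -- every element of FreeGroup β is a power of `of b`
  have hcyc : ∀ g : FreeGroup β, ∃ m : ℤ, g = FreeGroup.of b ^ m := by
    intro g
    have : g ∈ Subgroup.zpowers (FreeGroup.of b) := by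
      have htop : (Subgroup.closure (Set.range (FreeGroup.of : β → FreeGroup β))) = ⊤ :=
        FreeGroup.closure_range_of β
      have hle : Subgroup.closure (Set.range (FreeGroup.of : β → FreeGroup β)) ≤
          Subgroup.zpowers (FreeGroup.of b) := by
        apply Subgroup.closure_le _ |>.2
        rintro _ ⟨x, rfl⟩
        rw [Subsingleton.elim x b]
        exact Subgroup.mem_zpowers _
      exact hle (htop ▸ Subgroup.mem_top g)
    obtain ⟨m, hm⟩ := this
    exact ⟨m, hm.symm⟩
  obtain ⟨m, hm⟩ := hcyc (e ⟨u, hucl⟩)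
  obtain ⟨l, hl⟩ := hcyc (e ⟨v, hvcl⟩)
  -- the exponent map: detects nontriviality of powers of `of b`
  have hpow_ne : ∀ j : ℤ, j ≠ 0 → (FreeGroup.of b : FreeGroup β) ^ j ≠ 1 := by
    intro j hj hcontra
    have h3 : (FreeGroup.lift (fun _ : β => Multiplicative.ofAdd (1 : ℤ)))
        (FreeGroup.of b ^ j) = 1 := by rw [hcontra, map_one]
    rw [map_zpow, FreeGroup.lift_apply_of] at h3
    apply hj
    have h4 := congrArg Multiplicative.toAdd h3
    simpa using h4
  have hm0 : m ≠ 0 := by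
    rintro rfl
    rw [zpow_zero] at hm
    apply hu
    have := e.injective (hm.trans (map_one e).symm)
    exact congrArg Subtype.val this
  have hl0 : l ≠ 0 := by
    rintro rfl
    rw [zpow_zero] at hl
    apply hv
    have := e.injective (hl.trans (map_one e).symm)
    exact congrArg Subtype.val this
  -- u^l = v^m is the common nontrivial power
  refine ⟨u ^ l, ?_, ⟨l, rfl⟩, ⟨m, ?_⟩⟩
  · intro hcontra
    have h1 : (⟨u, hucl⟩ : H) ^ l = 1 := by
      apply Subtype.ext
      simpa using hcontra
    have := congrArg e h1
    rw [map_zpow, map_one, hm, ← zpow_mul] at this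
    exact hpow_ne (m * l) (mul_ne_zero hm0 hl0) this
  · have key : (⟨v, hvcl⟩ : H) ^ m = (⟨u, hucl⟩ : H) ^ l := by
      apply e.injective
      rw [map_zpow, map_zpow, hm, hl, ← zpow_mul, ← zpow_mul, mul_comm]
    have := congrArg Subtype.val key
    simpa using this

/-- Two nontrivial elements of a free group have a common nontrivial consequence:
a nontrivial element of the intersection of their normal closures. -/
private lemma exists_ne_one_mem_normalClosures {α : Type*} {u v : FreeGroup α}
    (hu : u ≠ 1) (hv : v ≠ 1) :
    ∃ z : FreeGroup α, z ≠ 1 ∧ z ∈ Subgroup.normalClosure {u} ∧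
      z ∈ Subgroup.normalClosure {v} := by
  have humem : u ∈ Subgroup.normalClosure {u} :=
    Subgroup.subset_normalClosure (Set.mem_singleton u)
  have hvmem : v ∈ Subgroup.normalClosure {v} :=
    Subgroup.subset_normalClosure (Set.mem_singleton v)
  by_cases hc : Commute u v
  · obtain ⟨z, hz1, ⟨a, ha⟩, ⟨c, hcv⟩⟩ := exists_ne_one_mem_zpowers hu hv hc
    refine ⟨z, hz1, ?_, ?_⟩
    · rw [← ha]; exact zpow_mem humem a
    · rw [← hcv]; exact zpow_mem hvmem c
  · refine ⟨u * v * u⁻¹ * v⁻¹, ?_, ?_, ?_⟩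
    · intro hcontra
      apply hc
      rw [mul_inv_eq_one] at hcontra
      exact mul_inv_eq_iff_eq_mul.mp hcontra
    · have h1 : u * v * u⁻¹ * v⁻¹ = u * (v * u⁻¹ * v⁻¹) := by group
      rw [h1]
      exact mul_mem humem (Subgroup.normalClosure_normal.conj_mem _ (inv_mem humem) v)
    · exact mul_mem (Subgroup.normalClosure_normal.conj_mem _ hvmem u) (inv_mem hvmem)

/-- Any finite set of nontrivial elements of a nontrivial free group has a common
nontrivial consequence. -/
private lemma exists_common_consequence_s3 {n : ℕ} (hn : 0 < n)
    (W : Finset (FreeGroup (Fin n))) (hW : (1 : FreeGroup (Fin n)) ∉ W) :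
    ∃ z : FreeGroup (Fin n), z ≠ 1 ∧ ∀ w ∈ W, z ∈ Subgroup.normalClosure {w} := by
  classical
  induction W using Finset.induction with
  | empty => exact ⟨FreeGroup.of ⟨0, hn⟩, FreeGroup.of_ne_one _, by simp⟩
  | @insert w W hwW ih =>
      have hw1 : w ≠ 1 := fun h => hW (h ▸ Finset.mem_insert_self w W)
      obtain ⟨z, hz1, hz⟩ := ih (fun h => hW (Finset.mem_insert_of_mem h))
      obtain ⟨z', hz'1, hz'w, hz'z⟩ := exists_ne_one_mem_normalClosures hw1 hz1
      refine ⟨z', hz'1, ?_⟩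
      intro x hx
      rcases Finset.mem_insert.mp hx with rfl | hxW
      · exact hz'w
      · have hle : Subgroup.normalClosure {z} ≤ Subgroup.normalClosure {x} :=
          Subgroup.normalClosure_le_normal (by
            simpa using hz x hxW)
        exact hle hz'z

/-- For a finitely generated group `G` and a positive integer `n`, the following are
equivalent: (1) for every positive `k` there are `n` elements of `G` satisfying no
nontrivial relation of length less than `k`; (2) `G` satisfies no identity in `n`
variables. -/
theorem no_short_relations_iff_no_identity (G : Type*) [Group G] (hG : Group.FG G)
    (n : ℕ) (hn : 0 < n) :
    (∀ k : ℕ, 0 < k → ∃ a : Fin n → G, ∀ w : FreeGroup (Fin n), w ≠ 1 →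
        FreeGroup.norm w < k → FreeGroup.lift a w ≠ 1) ↔
    ¬ ∃ w : FreeGroup (Fin n), w ≠ 1 ∧ ∀ a : Fin n → G, FreeGroup.lift a w = 1 := by
  classical
  constructor
  · rintro h1 ⟨w, hw, hall⟩
    obtain ⟨a, ha⟩ := h1 (FreeGroup.norm w + 1) (Nat.succ_pos _)
    exact ha w hw (Nat.lt_succ_self _) (hall a)
  · intro h2 k _
    push_neg at h2
    -- the set of nontrivial words of norm < k is finite
    have hfin : {w : FreeGroup (Fin n) | FreeGroup.norm w < k ∧ w ≠ 1}.Finite := by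
      have hlist : {l : List (Fin n × Bool) | l.length < k}.Finite :=
        List.finite_length_lt _ k
      have : {w : FreeGroup (Fin n) | FreeGroup.norm w < k ∧ w ≠ 1} ⊆
          FreeGroup.toWord ⁻¹' {l : List (Fin n × Bool) | l.length < k} := by
        intro w hw
        exact hw.1
      exact Set.Finite.subset
        (hlist.preimage (Set.injOn_of_injective FreeGroup.toWord_injective)) this
    set W : Finset (FreeGroup (Fin n)) := hfin.toFinset with hWdef
    have hW1 : (1 : FreeGroup (Fin n)) ∉ W := by
      simp [hWdef, Set.Finite.mem_toFinset]
    obtain ⟨z, hz1, hz⟩ := exists_common_consequence_s3 hn W hW1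
    obtain ⟨a, ha⟩ := h2 z hz1
    refine ⟨a, ?_⟩
    intro w hw hnorm hcontra
    apply ha
    have hmem : z ∈ Subgroup.normalClosure {w} := by
      apply hz
      rw [hWdef, Set.Finite.mem_toFinset]
      exact ⟨hnorm, hw⟩
    have hle : Subgroup.normalClosure {w} ≤ (FreeGroup.lift a).ker :=
      Subgroup.normalClosure_le_normal (by simpa [MonoidHom.mem_ker] using hcontra)
    exact hle hmem
end

section
/- If a group G satisfies an identity in n variables (for some n ≥ 1), then G satisfies an identity in 2 variables. Concretely: if there exists a nontrivial w ∈ FreeGroup (Fin n) such that FreeGroup.lift a sends w to 1 for every a : Fin n → G, then there exists a nontrivial g ∈ FreeGroup (Fin 2) such that FreeGroup.lift b sends g to 1 for every b : Fin 2 → G. -/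
open FreeGroup SemidirectProduct

/-- The shift action of `ℤ` on `FreeGroup ℤ`. -/
def shiftAct : Multiplicative ℤ →* MulAut (FreeGroup ℤ) where
  toFun m := FreeGroup.freeGroupCongr (Equiv.addRight (Multiplicative.toAdd m))
  map_one' := by
    apply MulEquiv.toMonoidHom_injective
    apply FreeGroup.ext_hom
    intro a
    simp
  map_mul' m k := by
    apply MulEquiv.toMonoidHom_injective
    apply FreeGroup.ext_hom
    intro a
    simp [add_comm, add_assoc, add_left_comm]

/-- If a group `G` satisfies an identity in `n ≥ 1` variables, then `G` satisfies an
identity in `2` variables. -/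
theorem identity_in_two_variables (G : Type*) [Group G] (n : ℕ) (hn : 1 ≤ n)
    (h : ∃ w : FreeGroup (Fin n), w ≠ 1 ∧ ∀ a : Fin n → G, FreeGroup.lift a w = 1) :
    ∃ g : FreeGroup (Fin 2), g ≠ 1 ∧ ∀ b : Fin 2 → G, FreeGroup.lift b g = 1 := by
  obtain ⟨w, hw, hid⟩ := h
  set x : FreeGroup (Fin 2) := FreeGroup.of 0 with hxdef
  set y : FreeGroup (Fin 2) := FreeGroup.of 1 with hydef
  set c : Fin n → FreeGroup (Fin 2) := fun i => x ^ (i : ℕ) * y * (x ^ (i : ℕ))⁻¹ with hcdef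
  refine ⟨FreeGroup.lift c w, ?_, ?_⟩
  · -- nontriviality, via the semidirect product `FreeGroup ℤ ⋊ ℤ`
    intro hg
    apply hw
    set ψ : FreeGroup (Fin 2) →* FreeGroup ℤ ⋊[shiftAct] Multiplicative ℤ :=
      FreeGroup.lift ![inr (Multiplicative.ofAdd 1), inl (FreeGroup.of 0)] with hψdef
    set ι : Fin n → ℤ := fun i => ((i : ℕ) : ℤ) with hιdef
    have key : ψ.comp (FreeGroup.lift c) = inl.comp (FreeGroup.map ι) := by
      apply FreeGroup.ext_hom
      intro i
      simp only [MonoidHom.comp_apply, FreeGroup.lift_apply_of, FreeGroup.map.of]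
      have hx : ψ x = inr (Multiplicative.ofAdd 1) := by simp [hψdef, hxdef]
      have hy : ψ y = inl (FreeGroup.of 0) := by simp [hψdef, hydef]
      have : ψ (c i) = inr (Multiplicative.ofAdd 1 ^ (i : ℕ)) * inl (FreeGroup.of 0) *
          inr (Multiplicative.ofAdd 1 ^ (i : ℕ))⁻¹ := by
        simp [hcdef, hx, hy]
      rw [this, ← inl_aut]
      congr 1
      show (FreeGroup.freeGroupCongr
        (Equiv.addRight (Multiplicative.toAdd (Multiplicative.ofAdd (1:ℤ) ^ (i : ℕ)))))
          (FreeGroup.of 0) = FreeGroup.of (ι i)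
      simp [hιdef]
    have hmap1 : FreeGroup.map ι w = 1 := by
      apply inl_injective (φ := shiftAct)
      have := congrArg (fun f : FreeGroup (Fin n) →* _ => f w) key
      simp only [MonoidHom.comp_apply] at this
      rw [← this, hg, _root_.map_one, _root_.map_one]
    -- `FreeGroup.map ι` is injective since `ι` has a left inverse
    set r : ℤ → Fin n := fun z => if hz : z.toNat < n then ⟨z.toNat, hz⟩ else ⟨0, hn⟩ with hrdef
    have hr : ∀ i, r (ι i) = i := by
      intro i
      simp only [hrdef, hιdef, Int.toNat_natCast]
      rw [dif_pos i.isLt]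
    have : w = FreeGroup.map r (FreeGroup.map ι w) := by
      rw [FreeGroup.map.comp]
      have : r ∘ ι = id := funext hr
      rw [this, FreeGroup.map.id]
    rw [this, hmap1, _root_.map_one]
  · -- the identity holds
    intro b
    have key : (FreeGroup.lift b).comp (FreeGroup.lift c) =
        FreeGroup.lift (fun i : Fin n => (b 0) ^ (i : ℕ) * b 1 * ((b 0) ^ (i : ℕ))⁻¹) := by
      apply FreeGroup.ext_hom
      intro i
      simp [hcdef, hxdef, hydef]
    have := congrArg (fun f : FreeGroup (Fin n) →* G => f w) key
    simp only [MonoidHom.comp_apply] at this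
    rw [this, hid]
end

section
/- If every n-tuple of elements of a group G satisfies some nontrivial relation of bounded length, then G satisfies an identity in n variables. Concretely: if there exist n and k such that for every a : Fin n → G there is some w ∈ FreeGroup (Fin n) with w ≠ 1, FreeGroup.norm w < k, and FreeGroup.lift a sending w to 1, then there exists a single nontrivial h ∈ FreeGroup (Fin n) such that FreeGroup.lift a sends h to 1 for every a : Fin n → G. -/
open Subgroup

/-- Distinct generators of a free group do not commute. -/
lemma FreeGroup.not_commute_of_ne {β : Type*} {a b : β} (hab : a ≠ b) :
    ¬ Commute (FreeGroup.of a) (FreeGroup.of b) := by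
  classical
  intro h
  let σ : Equiv.Perm (Fin 3) := Equiv.swap 0 1
  let τ : Equiv.Perm (Fin 3) := Equiv.swap 1 2
  let φ : FreeGroup β →* Equiv.Perm (Fin 3) :=
    FreeGroup.lift (fun x => if x = a then σ else τ)
  have h2 : Commute (φ (FreeGroup.of a)) (φ (FreeGroup.of b)) := h.map φ
  rw [FreeGroup.lift_apply_of, FreeGroup.lift_apply_of, if_pos rfl, if_neg (Ne.symm hab)] at h2
  have : σ * τ = τ * σ := h2
  revert this
  decide

/-- In a free group on a one-element type, everything is a power of the generator. -/
lemma FreeGroup.eq_zpow {β : Type*} [Unique β] (x : FreeGroup β) :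
    ∃ m : ℤ, x = FreeGroup.of (default : β) ^ m := by
  induction x using FreeGroup.induction_on with
  | C1 => exact ⟨0, by simp⟩
  | of x =>
    obtain rfl : x = default := Unique.eq_default x
    exact ⟨1, by rw [zpow_one]⟩
  | inv_of x _ =>
    obtain rfl : x = default := Unique.eq_default x
    exact ⟨-1, by rw [zpow_neg, zpow_one]⟩
  | mul x y hx hy =>
    obtain ⟨m, rfl⟩ := hx
    obtain ⟨m', rfl⟩ := hy
    exact ⟨m + m', (zpow_add _ _ _).symm⟩

lemma FreeGroup.of_zpow_ne_one {β : Type*} (b : β) {m : ℤ} (hm : m ≠ 0) :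
    FreeGroup.of b ^ m ≠ 1 := by
  intro h
  let ψ : FreeGroup β →* Multiplicative ℤ :=
    FreeGroup.lift (fun _ => Multiplicative.ofAdd (1 : ℤ))
  have := congrArg ψ h
  rw [map_zpow, _root_.map_one, FreeGroup.lift_apply_of] at this
  have : m = 0 := by
    have := congrArg Multiplicative.toAdd this
    simpa using this
  exact hm this

/-- Key lemma: the normal closures of two nontrivial elements of a free group
intersect nontrivially. -/
lemma key_lemma {α : Type*} {u v : FreeGroup α} (hu : u ≠ 1) (hv : v ≠ 1) :
    ∃ t : FreeGroup α, t ≠ 1 ∧ t ∈ normalClosure {u} ∧ t ∈ normalClosure {v} := by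
  have humem : u ∈ normalClosure {u} := subset_normalClosure rfl
  have hvmem : v ∈ normalClosure {v} := subset_normalClosure rfl
  by_cases hc : Commute u v
  · -- u and v commute; the subgroup they generate is free and abelian, hence cyclic
    set H : Subgroup (FreeGroup α) := closure {u, v} with hH
    have huH : u ∈ H := subset_closure (by simp)
    have hvH : v ∈ H := subset_closure (by simp)
    have hcomm : ∀ x y : H, Commute (x : FreeGroup α) (y : FreeGroup α) := by
      rintro ⟨x, hx⟩ ⟨y, hy⟩
      refine closure_induction₂ (p := fun x y _ _ => Commute x y) ?_ ?_ ?_ ?_ ?_ ?_ ?_ hx hy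
      · rintro x y (rfl | rfl) (rfl | rfl)
        exacts [Commute.refl _, hc, hc.symm, Commute.refl _]
      · exact fun x _ => Commute.one_left x
      · exact fun x _ => Commute.one_right x
      · exact fun x y z _ _ _ h1 h2 => h1.mul_left h2
      · exact fun y z x _ _ _ h1 h2 => h1.mul_right h2
      · exact fun x y _ _ h => h.inv_left
      · exact fun x y _ _ h => h.inv_right
    haveI : IsFreeGroup H := inferInstance
    set β := IsFreeGroup.Generators H
    set e : FreeGroup β ≃* H := IsFreeGroup.mulEquiv H
    haveI : Subsingleton β := by
      constructor
      intro a b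
      by_contra hab
      exact FreeGroup.not_commute_of_ne hab <| by
        have hcommH : Commute (e (FreeGroup.of a)) (e (FreeGroup.of b)) :=
          Subtype.ext (hcomm _ _)
        have h2 := hcommH.map e.symm.toMonoidHom
        simpa using h2
    haveI : Nonempty β := by
      by_contra hne
      haveI : IsEmpty β := not_nonempty_iff.mp hne
      have : (⟨u, huH⟩ : H) = 1 := by
        have : ∀ x : FreeGroup β, x = 1 := by
          intro x
          induction x using FreeGroup.induction_on with
          | C1 => rfl
          | of x => exact (IsEmpty.false x).elim
          | inv_of x _ => exact (IsEmpty.false x).elim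
          | mul x y hx hy => rw [hx, hy, one_mul]
        calc (⟨u, huH⟩ : H) = e (e.symm ⟨u, huH⟩) := (e.apply_symm_apply _).symm
        _ = e 1 := by rw [this (e.symm ⟨u, huH⟩)]
        _ = 1 := map_one e
      exact hu (Subtype.ext_iff.mp this)
    haveI : Unique β := uniqueOfSubsingleton (Classical.arbitrary β)
    set z : H := e (FreeGroup.of (default : β)) with hz
    have hzall : ∀ x : H, ∃ m : ℤ, x = z ^ m := by
      intro x
      obtain ⟨m, hm⟩ := FreeGroup.eq_zpow (e.symm x)
      exact ⟨m, by rw [hz, ← map_zpow, ← hm, e.apply_symm_apply]⟩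
    obtain ⟨p, hp⟩ := hzall ⟨u, huH⟩
    obtain ⟨q, hq⟩ := hzall ⟨v, hvH⟩
    have hpu : u = (z : FreeGroup α) ^ p := by
      have := Subtype.ext_iff.mp hp
      simpa using this
    have hqv : v = (z : FreeGroup α) ^ q := by
      have := Subtype.ext_iff.mp hq
      simpa using this
    have hp0 : p ≠ 0 := by rintro rfl; exact hu (by simpa using hpu)
    have hq0 : q ≠ 0 := by rintro rfl; exact hv (by simpa using hqv)
    refine ⟨(z : FreeGroup α) ^ (p * q), ?_, ?_, ?_⟩
    · intro h1
      have : z ^ (p * q) = (1 : H) := by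
        apply Subtype.ext
        simpa using h1
      rw [hz, ← map_zpow, ← map_one e] at this
      have h2 := e.injective this
      exact FreeGroup.of_zpow_ne_one (default : β) (mul_ne_zero hp0 hq0) h2
    · rw [zpow_mul, ← hpu]
      exact zpow_mem humem q
    · rw [mul_comm p q, zpow_mul, ← hqv]
      exact zpow_mem hvmem p
  · -- u and v do not commute: the commutator works
    refine ⟨u * v * u⁻¹ * v⁻¹, ?_, ?_, ?_⟩
    · intro h1
      apply hc
      have : u * v = v * u := by
        have := congrArg (fun x => x * v * u) h1
        simpa [mul_assoc] using this
      exact this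
    · have : u * v * u⁻¹ * v⁻¹ = u * (v * u⁻¹ * v⁻¹) := by group
      rw [this]
      exact mul_mem humem ((normalClosure_normal).conj_mem _ (inv_mem humem) v)
    · have : u * v * u⁻¹ * v⁻¹ = (u * v * u⁻¹) * v⁻¹ := by group
      rw [this]
      exact mul_mem ((normalClosure_normal).conj_mem _ hvmem u) (inv_mem hvmem)

/-- Common nontrivial element of normal closures of finitely many nontrivial elements. -/
lemma finset_key {α : Type*} (S : Finset (FreeGroup α)) (hS : S.Nonempty)
    (h1 : ∀ w ∈ S, w ≠ 1) :
    ∃ h : FreeGroup α, h ≠ 1 ∧ ∀ w ∈ S, h ∈ normalClosure {w} := by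
  classical
  induction hS using Finset.Nonempty.cons_induction with
  | singleton w =>
    exact ⟨w, h1 w (Finset.mem_singleton_self w), fun w' hw' => by
      rw [Finset.mem_singleton] at hw'; subst hw'; exact subset_normalClosure rfl⟩
  | cons a S ha hSne ih =>
    obtain ⟨h, hne, hmem⟩ := ih (fun w hw => h1 w (Finset.mem_cons_of_mem hw))
    obtain ⟨t, ht1, hta, hth⟩ := key_lemma (h1 a (Finset.mem_cons_self a S)) hne
    refine ⟨t, ht1, fun w hw => ?_⟩
    rcases Finset.mem_cons.mp hw with rfl | hw'
    · exact hta
    · exact normalClosure_le_normal (by simpa using hmem w hw') hth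

/-- If every `n`-tuple of elements of a group `G` satisfies some nontrivial relation of
length less than `k`, then `G` satisfies a single identity in `n` variables. -/
theorem identity_of_bounded_relations (G : Type*) [Group G] (n k : ℕ)
    (hrel : ∀ a : Fin n → G, ∃ w : FreeGroup (Fin n), w ≠ 1 ∧ FreeGroup.norm w < k ∧
      FreeGroup.lift a w = 1) :
    ∃ h : FreeGroup (Fin n), h ≠ 1 ∧ ∀ a : Fin n → G, FreeGroup.lift a h = 1 := by
  classical
  choose f hf1 hfn hfk using hrel
  have hfin : (Set.range f).Finite := by
    apply Set.Finite.subset (Set.Finite.preimage (Set.injOn_of_injective FreeGroup.toWord_injective)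
      (List.finite_length_lt (Fin n × Bool) k))
    rintro _ ⟨a, rfl⟩
    exact hfn a
  have hne : (hfin.toFinset).Nonempty := by
    refine ⟨f (fun _ => 1), ?_⟩
    simp [Set.Finite.mem_toFinset]
  obtain ⟨h, hh1, hhmem⟩ := finset_key hfin.toFinset hne (by
    rintro w hw
    rw [Set.Finite.mem_toFinset] at hw
    obtain ⟨a, rfl⟩ := hw
    exact hf1 a)
  refine ⟨h, hh1, fun a => ?_⟩
  have hmem : h ∈ normalClosure {f a} := hhmem _ (by rw [Set.Finite.mem_toFinset]; exact ⟨a, rfl⟩)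
  have hle : normalClosure {f a} ≤ (FreeGroup.lift a).ker :=
    normalClosure_le_normal (by simp [MonoidHom.mem_ker, hfk a])
  exact MonoidHom.mem_ker.mp (hle hmem)
end

section
/- Given two nontrivial elements h and f of a free group FreeGroup (Fin n), there exists a nontrivial element g ∈ FreeGroup (Fin n) such that for every group G and every map a : Fin n → G, if FreeGroup.lift a sends h to 1 or sends f to 1, then FreeGroup.lift a sends g to 1. (In the paper's construction: if h and f commute in the free group then they are powers w^α, w^β of a common element w and one takes g = w^{αβ}; otherwise one takes g = [h, f].) -/
/-- In a commutative free group, the generator type is a subsingleton. -/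
lemma subsingleton_generators_of_comm {S : Type*}
    (hcomm : ∀ x y : FreeGroup S, x * y = y * x) : Subsingleton S := by
  classical
  refine ⟨fun a b => ?_⟩
  by_contra hne
  have h1 : FreeGroup.of a * FreeGroup.of b = FreeGroup.of b * FreeGroup.of a := hcomm _ _
  have h2 := congrArg (FreeGroup.lift
      (fun s : S => if s = a then Equiv.swap (0 : Fin 3) 1 else Equiv.swap 1 2)) h1
  have h3 : (Equiv.swap (0 : Fin 3) 1) * Equiv.swap 1 2
      = Equiv.swap 1 2 * Equiv.swap (0 : Fin 3) 1 := by
    simpa [if_pos, if_neg (Ne.symm hne)] using h2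
  exact absurd h3 (by decide)

/-- Every element of a free group over a subsingleton type is a power of `of a`. -/
lemma eq_pow_of_subsingleton {S : Type*} [Subsingleton S] (a : S) (x : FreeGroup S) :
    x = FreeGroup.of a ^
      (Multiplicative.toAdd (FreeGroup.lift (fun _ : S => Multiplicative.ofAdd (1 : ℤ)) x)) := by
  induction x with
  | C1 => simp
  | of b =>
    have : b = a := Subsingleton.elim _ _
    subst this
    rw [FreeGroup.lift_apply_of]
    simp
  | inv_of b ih =>
    have : b = a := Subsingleton.elim _ _
    subst this
    rw [map_inv, FreeGroup.lift_apply_of]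
    simp
  | mul x y ihx ihy =>
    rw [_root_.map_mul]
    conv_lhs => rw [ihx, ihy]
    rw [← zpow_add]
    congr 1

/-- A commutative free group injects into `Multiplicative ℤ`. -/
lemma exists_injective_hom_of_comm (H : Type*) [Group H] [IsFreeGroup H]
    (hcomm : ∀ x y : H, x * y = y * x) :
    ∃ χ : H →* Multiplicative ℤ, Function.Injective χ := by
  classical
  set S := IsFreeGroup.Generators H
  let e : H ≃* FreeGroup S := IsFreeGroup.toFreeGroup H
  have hcomm' : ∀ x y : FreeGroup S, x * y = y * x := by
    intro x y
    have := hcomm (e.symm x) (e.symm y)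
    have := congrArg e this
    simpa using this
  have : Subsingleton S := subsingleton_generators_of_comm hcomm'
  let ψ : FreeGroup S →* Multiplicative ℤ :=
    FreeGroup.lift (fun _ : S => Multiplicative.ofAdd (1 : ℤ))
  refine ⟨ψ.comp e.toMonoidHom, ?_⟩
  intro x y hxy
  rcases isEmpty_or_nonempty S with hS | ⟨⟨a⟩⟩
  · have htriv : ∀ u : FreeGroup S, u = 1 := by
      intro u
      induction u with
      | C1 => rfl
      | of b => exact hS.elim b
      | inv_of b _ => exact hS.elim b
      | mul x' y' ihx ihy => rw [ihx, ihy, one_mul]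
    apply e.injective
    rw [htriv (e x), htriv (e y)]
  · apply e.injective
    rw [eq_pow_of_subsingleton a (e x), eq_pow_of_subsingleton a (e y)]
    simp only [MonoidHom.comp_apply, MulEquiv.coe_toMonoidHom] at hxy
    rw [show (FreeGroup.lift (fun _ : S => Multiplicative.ofAdd (1 : ℤ))) (e x) = ψ (e x) from rfl,
      show (FreeGroup.lift (fun _ : S => Multiplicative.ofAdd (1 : ℤ))) (e y) = ψ (e y) from rfl,
      hxy]

/-- Given two nontrivial elements `h`, `f` of a free group, there is a nontrivial element
`g` such that in any group `G`, any assignment of the generators killing `h` or killing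
`f` also kills `g`. -/
theorem exists_common_consequence (n : ℕ) (h f : FreeGroup (Fin n))
    (hh : h ≠ 1) (hf : f ≠ 1) :
    ∃ g : FreeGroup (Fin n), g ≠ 1 ∧
      ∀ (G : Type*) [Group G] (a : Fin n → G),
        (FreeGroup.lift a h = 1 ∨ FreeGroup.lift a f = 1) → FreeGroup.lift a g = 1 := by
  classical
  by_cases hcom : h * f = f * h
  · -- commuting case: pass to the subgroup generated by h and f, which is free and abelian
    set H : Subgroup (FreeGroup (Fin n)) := Subgroup.closure {h, f} with hH
    have hmemh : h ∈ H := Subgroup.subset_closure (by simp)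
    have hmemf : f ∈ H := Subgroup.subset_closure (by simp)
    -- H is commutative
    have hcent : H ≤ Subgroup.centralizer {h, f} := by
      rw [hH, Subgroup.closure_le]
      intro x hx
      rw [SetLike.mem_coe, Subgroup.mem_centralizer_iff]
      intro y hy
      rcases hx with rfl | hx
      · rcases hy with rfl | hy
        · rfl
        · simp at hy; subst hy; exact hcom.symm
      · simp at hx; subst hx
        rcases hy with rfl | hy
        · exact hcom
        · simp at hy; subst hy; rfl
    have hcomm : ∀ x y : H, x * y = y * x := by
      intro x y
      have hx' : (x : FreeGroup (Fin n)) ∈ Subgroup.centralizer {h, f} := hcent x.2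
      rw [Subgroup.mem_centralizer_iff] at hx'
      have hyH : (y : FreeGroup (Fin n)) ∈ Subgroup.closure {h, f} := y.2
      have : (y : FreeGroup (Fin n)) * x = x * y := by
        refine Subgroup.closure_induction ?_ ?_ ?_ ?_ hyH
        · intro z hz
          exact hx' z hz
        · simp
        · intro z w _ _ hz hw
          calc z * w * (x : FreeGroup (Fin n)) = z * (w * x) := by rw [mul_assoc]
            _ = z * (x * w) := by rw [hw]
            _ = (z * x) * w := by rw [mul_assoc]
            _ = (x * z) * w := by rw [hz]
            _ = x * (z * w) := by rw [mul_assoc]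
        · intro z _ hz
          calc z⁻¹ * (x : FreeGroup (Fin n)) = z⁻¹ * (z * x) * z⁻¹ := by
                rw [hz]; group
            _ = x * z⁻¹ := by group
      ext
      push_cast
      exact this.symm
    obtain ⟨χ, hχ⟩ := exists_injective_hom_of_comm H hcomm
    set h' : H := ⟨h, hmemh⟩
    set f' : H := ⟨f, hmemf⟩
    set α : ℤ := Multiplicative.toAdd (χ h') with hαdef
    set β : ℤ := Multiplicative.toAdd (χ f') with hβdef
    have hcoeχh : χ h' = Multiplicative.ofAdd α := rfl
    have hcoeχf : χ f' = Multiplicative.ofAdd β := rfl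
    have hα : α ≠ 0 := by
      intro h0
      apply hh
      have : χ h' = χ 1 := by
        rw [_root_.map_one, hcoeχh, h0]; rfl
      have := hχ this
      simpa [h'] using congrArg (Subtype.val) this
    have hβ : β ≠ 0 := by
      intro h0
      apply hf
      have : χ f' = χ 1 := by
        rw [_root_.map_one, hcoeχf, h0]; rfl
      have := hχ this
      simpa [f'] using congrArg (Subtype.val) this
    have hkey : h' ^ β = f' ^ α := by
      apply hχ
      rw [map_zpow, map_zpow, hcoeχh, hcoeχf, ← ofAdd_zsmul, ← ofAdd_zsmul,
        smul_eq_mul, smul_eq_mul, mul_comm]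
    refine ⟨h ^ β, ?_, ?_⟩
    · intro h0
      have h1 : h' ^ β = 1 := by
        ext; push_cast; simpa [h'] using h0
      have h2 : χ (h' ^ β) = χ 1 := by rw [h1]
      rw [_root_.map_one, map_zpow, hcoeχh, ← ofAdd_zsmul] at h2
      have h3 : β • α = 0 := by exact_mod_cast congrArg Multiplicative.toAdd h2
      rcases (show β = 0 ∨ α = 0 by simpa using h3) with hc | hc
      · exact hβ hc
      · exact hα hc
    · intro G _ a hor
      have hcoe : h ^ β = f ^ α := by
        have := congrArg (Subtype.val) hkey
        push_cast at this
        simpa using this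
      rcases hor with h1 | h1
      · rw [map_zpow, h1, one_zpow]
      · rw [hcoe, map_zpow, h1, one_zpow]
  · -- noncommuting case: take the commutator
    refine ⟨h * f * h⁻¹ * f⁻¹, ?_, ?_⟩
    · intro h0
      apply hcom
      have : h * f * h⁻¹ * f⁻¹ * f * h = f * h := by rw [h0, one_mul]
      calc h * f = h * f * h⁻¹ * f⁻¹ * f * h := by group
        _ = f * h := this
    · intro G _ a hor
      rcases hor with h1 | h1 <;>
        simp [_root_.map_mul, _root_.map_inv, h1]
end

section
/- Thompson's group F has exponential growth: there exists a real constant c > 1 such that for every m : ℕ, the set of elements of F expressible as products of at most m factors, each factor lying in {x₀, x₁, x₀⁻¹, x₁⁻¹}, has cardinality at least c^m. -/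
open scoped commutatorElement

/-- The generators `x₀` and `x₁` of Thompson's group `F`. -/
noncomputable def thompsonX₀ : ThompsonF := PresentedGroup.of 0
noncomputable def thompsonX₁ : ThompsonF := PresentedGroup.of 1

/-! ### A representation of `F` by bijections of `ℝ` -/

noncomputable def Amap : Equiv.Perm ℝ where
  toFun t := t - 1
  invFun t := t + 1
  left_inv t := by ring
  right_inv t := by ring

noncomputable def Bmap : Equiv.Perm ℝ where
  toFun t := if t ≤ 0 then t else if t ≤ 2 then t / 2 else t - 1
  invFun t := if t ≤ 0 then t else if t ≤ 1 then 2 * t else t + 1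
  left_inv t := by dsimp only; split_ifs <;> linarith
  right_inv t := by dsimp only; split_ifs <;> linarith

lemma A_apply (t : ℝ) : Amap t = t - 1 := rfl
lemma Ainv_apply (t : ℝ) : Amap⁻¹ t = t + 1 := rfl
lemma B_apply (t : ℝ) : Bmap t = if t ≤ 0 then t else if t ≤ 2 then t / 2 else t - 1 := rfl
lemma Binv_apply (t : ℝ) : Bmap⁻¹ t = if t ≤ 0 then t else if t ≤ 1 then 2 * t else t + 1 := rfl

set_option maxHeartbeats 2000000 in
lemma rel1_holds : ⁅Amap * Bmap⁻¹, Amap⁻¹ * Bmap * Amap⁆ = 1 := by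
  rw [commutatorElement_eq_one_iff_mul_comm]
  ext t
  simp only [Equiv.Perm.mul_apply, A_apply, Ainv_apply, B_apply, Binv_apply]
  split_ifs <;> linarith

set_option maxHeartbeats 4000000 in
lemma rel2_holds : ⁅Amap * Bmap⁻¹, Amap⁻¹ ^ 2 * Bmap * Amap ^ 2⁆ = 1 := by
  rw [commutatorElement_eq_one_iff_mul_comm]
  ext t
  simp only [pow_two, Equiv.Perm.mul_apply, A_apply, Ainv_apply, B_apply, Binv_apply]
  split_ifs <;> linarith

noncomputable def fgen : Fin 2 → Equiv.Perm ℝ := ![Amap, Bmap]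

lemma hrels : ∀ r ∈ thompsonRels, FreeGroup.lift fgen r = 1 := by
  intro r hr
  simp only [thompsonRels, Set.mem_insert_iff, Set.mem_singleton_iff] at hr
  rcases hr with rfl | rfl
  · rw [map_commutatorElement]
    simp only [map_mul, map_inv, map_pow, FreeGroup.lift_apply_of, fgen,
      Matrix.cons_val_zero, Matrix.cons_val_one, Matrix.head_cons]
    exact rel1_holds
  · rw [map_commutatorElement]
    simp only [map_mul, map_inv, map_pow, FreeGroup.lift_apply_of, fgen,
      Matrix.cons_val_zero, Matrix.cons_val_one, Matrix.head_cons]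
    exact rel2_holds

noncomputable def φF : ThompsonF →* Equiv.Perm ℝ := PresentedGroup.toGroup hrels

lemma φF_x0 : φF thompsonX₀ = Amap := PresentedGroup.toGroup.of hrels
lemma φF_x1 : φF thompsonX₁ = Bmap := PresentedGroup.toGroup.of hrels

/-! ### The element `s` with support in `(0,2)` -/

noncomputable def Smap : Equiv.Perm ℝ := Amap⁻¹ * Bmap * Amap * Bmap⁻¹

lemma S_apply (t : ℝ) : Smap t = Amap⁻¹ (Bmap (Amap (Bmap⁻¹ t))) := rfl

lemma S_fix_nonpos {t : ℝ} (h : t ≤ 0) : Smap t = t := by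
  simp only [S_apply, A_apply, Ainv_apply, B_apply, Binv_apply]
  split_ifs <;> linarith

lemma S_fix_ge {t : ℝ} (h : 2 ≤ t) : Smap t = t := by
  simp only [S_apply, A_apply, Ainv_apply, B_apply, Binv_apply]
  split_ifs <;> linarith

lemma S_one : Smap 1 = 3 / 2 := by
  simp only [S_apply, A_apply, Ainv_apply, B_apply, Binv_apply]
  norm_num

noncomputable def Tmap : Equiv.Perm ℝ := Amap⁻¹ * Amap⁻¹

lemma T_apply (t : ℝ) : Tmap t = t + 2 := by
  simp only [Tmap, Equiv.Perm.mul_apply, Ainv_apply]; ring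

noncomputable def Sb (b : Bool) : Equiv.Perm ℝ := if b then Smap else 1

lemma Sb_fix_nonpos (b : Bool) {t : ℝ} (h : t ≤ 0) : Sb b t = t := by
  cases b <;> simp [Sb, S_fix_nonpos h]

noncomputable def gP : List Bool → Equiv.Perm ℝ
  | [] => 1
  | b :: e => Sb b * Tmap * gP e

lemma gP_base : ∀ e : List Bool, ∀ t : ℝ, t ≤ 0 → gP e (t - 2 * e.length) = t := by
  intro e
  induction e with
  | nil => intro t ht; simp [gP]
  | cons b e ih =>
      intro t ht
      have key : (t - 2 * (↑(b :: e).length) : ℝ) = (t - 2) - 2 * e.length := by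
        simp [List.length_cons]; ring
      rw [key]
      simp only [gP, Equiv.Perm.mul_apply]
      rw [ih (t - 2) (by linarith), T_apply]
      have : t - 2 + 2 = t := by ring
      rw [this, Sb_fix_nonpos b ht]

lemma gP_detect (b : Bool) (e : List Bool) :
    gP (b :: e) ((1 : ℝ) - 2 * (b :: e).length) = Sb b 1 := by
  have key : ((1 : ℝ) - 2 * (↑(b :: e).length) : ℝ) = (-1) - 2 * e.length := by
    simp [List.length_cons]; ring
  rw [key]
  simp only [gP, Equiv.Perm.mul_apply]
  rw [gP_base e (-1) (by norm_num), T_apply]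
  norm_num

lemma gP_inj : ∀ e f : List Bool, e.length = f.length → gP e = gP f → e = f := by
  intro e
  induction e with
  | nil =>
      intro f hl _
      exact (List.length_eq_zero_iff.mp hl.symm).symm ▸ rfl
  | cons b e ih =>
      intro f hl hg
      cases f with
      | nil => simp at hl
      | cons c f =>
          have hlen : e.length = f.length := by simpa using hl
          have hpt : Sb b 1 = Sb c 1 := by
            have h1 := gP_detect b e
            have h2 := gP_detect c f
            rw [hg] at h1
            have hll : ((b :: e).length : ℝ) = ((c :: f).length : ℝ) := by
              simp [hlen]
            rw [hll] at h1
            exact h1.symm.trans h2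
          have hbc : b = c := by
            cases b <;> cases c <;> first
              | rfl
              | (exfalso; simp [Sb, S_one] at hpt; norm_num at hpt)
          subst hbc
          have htail : gP e = gP f := by
            have := hg
            simp only [gP] at this
            exact mul_left_cancel this
          rw [ih f hlen htail]

/-! ### Words in the generators of `ThompsonF` -/

noncomputable def genSet : Set ThompsonF :=
  {thompsonX₀, thompsonX₁, thompsonX₀⁻¹, thompsonX₁⁻¹}

noncomputable def wlist (b : Bool) : List ThompsonF :=
  if b then [thompsonX₀⁻¹, thompsonX₁, thompsonX₀, thompsonX₁⁻¹, thompsonX₀⁻¹, thompsonX₀⁻¹]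
  else [thompsonX₀⁻¹, thompsonX₀⁻¹]

noncomputable def glist : List Bool → List ThompsonF
  | [] => []
  | b :: e => wlist b ++ glist e

lemma glist_length : ∀ e : List Bool, (glist e).length ≤ 6 * e.length := by
  intro e
  induction e with
  | nil => simp [glist]
  | cons b e ih =>
      simp only [glist, List.length_append, List.length_cons]
      have : (wlist b).length ≤ 6 := by cases b <;> simp [wlist]
      omega

lemma glist_mem : ∀ e : List Bool, ∀ u ∈ glist e, u ∈ genSet := by
  intro e
  induction e with
  | nil => simp [glist]
  | cons b e ih =>
      intro u hu
      rcases List.mem_append.mp hu with h | h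
      · cases b <;> simp only [wlist, if_true, if_false, Bool.false_eq_true] at h <;>
          fin_cases h <;> simp [genSet]
      · exact ih u h

lemma φF_wlist (b : Bool) : φF (wlist b).prod = Sb b * Tmap := by
  cases b <;>
    simp [wlist, Sb, Tmap, Smap, map_mul, map_inv, φF_x0, φF_x1, mul_assoc]

lemma φF_glist : ∀ e : List Bool, φF (glist e).prod = gP e := by
  intro e
  induction e with
  | nil => simp [glist, gP]
  | cons b e ih =>
      simp only [glist, List.prod_append, map_mul, ih, φF_wlist, gP, mul_assoc]

lemma glist_prod_inj {e f : List Bool} (hl : e.length = f.length)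
    (h : (glist e).prod = (glist f).prod) : e = f := by
  apply gP_inj e f hl
  rw [← φF_glist, ← φF_glist, h]

/-! ### The ball of radius `m` -/

noncomputable def ball (m : ℕ) : Set ThompsonF :=
  {g : ThompsonF | ∃ l : List ThompsonF, l.length ≤ m ∧
    (∀ u ∈ l, u ∈ genSet) ∧ l.prod = g}

lemma genSet_finite : genSet.Finite := by
  simp only [genSet]
  exact (Set.finite_singleton _).insert _ |>.insert _ |>.insert _

lemma one_mem_ball (m : ℕ) : (1 : ThompsonF) ∈ ball m :=
  ⟨[], by simp⟩

lemma ball_finite : ∀ m : ℕ, (ball m).Finite := by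
  intro m
  induction m with
  | zero =>
      apply Set.Finite.subset (Set.finite_singleton (1 : ThompsonF))
      rintro g ⟨l, hl, -, hp⟩
      have : l = [] := List.length_eq_zero_iff.mp (Nat.le_zero.mp hl)
      simp [this] at hp
      simp [← hp]
  | succ m ih =>
      apply Set.Finite.subset (((genSet_finite.insert 1)).mul ih)
      rintro g ⟨l, hl, hmem, hp⟩
      cases l with
      | nil =>
          refine ⟨1, Set.mem_insert _ _, 1, one_mem_ball m, ?_⟩
          simp at hp; simp [hp]
      | cons u l' =>
          refine ⟨u, Set.mem_insert_of_mem _ (hmem u (by simp)), l'.prod,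
            ⟨l', by simpa using hl, fun v hv => hmem v (by simp [hv]), rfl⟩, ?_⟩
          rw [← hp, List.prod_cons]

lemma card_ball_ge (n m : ℕ) (h : 6 * n ≤ m) : 2 ^ n ≤ Nat.card (ball m) := by
  haveI := (ball_finite m).to_subtype
  have hmem : ∀ e : Fin n → Bool, (glist (List.ofFn e)).prod ∈ ball m := by
    intro e
    refine ⟨glist (List.ofFn e), ?_, glist_mem _, rfl⟩
    calc (glist (List.ofFn e)).length ≤ 6 * (List.ofFn e).length := glist_length _
      _ ≤ m := by simpa using h
  have hF : Function.Injective (fun e : Fin n → Bool =>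
      (⟨(glist (List.ofFn e)).prod, hmem e⟩ : ball m)) := by
    intro e f hef
    have : (glist (List.ofFn e)).prod = (glist (List.ofFn f)).prod :=
      congrArg Subtype.val hef
    have := glist_prod_inj (by simp) this
    exact List.ofFn_injective this
  have := Nat.card_le_card_of_injective _ hF
  simpa [Nat.card_eq_fintype_card] using this

lemma x0_ne_one : thompsonX₀ ≠ 1 := by
  intro h
  have : φF thompsonX₀ = 1 := by rw [h, map_one]
  rw [φF_x0] at this
  have h0 : Amap (0 : ℝ) = (0 : ℝ) := by rw [this]; rfl
  rw [A_apply] at h0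
  norm_num at h0

lemma two_le_card_ball {m : ℕ} (h : 1 ≤ m) : 2 ≤ Nat.card (ball m) := by
  haveI := (ball_finite m).to_subtype
  have hx : thompsonX₀ ∈ ball m := ⟨[thompsonX₀], by simpa using h,
    by simp [genSet], by simp⟩
  have hF : Function.Injective (fun b : Bool =>
      (⟨if b then thompsonX₀ else 1, by cases b <;> simp [hx, one_mem_ball m]⟩ : ball m)) := by
    intro b c hbc
    have := congrArg Subtype.val hbc
    cases b <;> cases c <;> simp_all <;> exact x0_ne_one (by simp_all)
  have := Nat.card_le_card_of_injective _ hF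
  simpa [Nat.card_eq_fintype_card] using this

/-- Thompson's group `F` has exponential growth: there is `c > 1` such that for every `m`,
the set of elements expressible as products of at most `m` factors from
`{x₀, x₁, x₀⁻¹, x₁⁻¹}` has cardinality at least `c ^ m`. -/
theorem thompson_exponential_growth :
    ∃ c : ℝ, 1 < c ∧ ∀ m : ℕ,
      c ^ m ≤ Nat.card {g : ThompsonF | ∃ l : List ThompsonF, l.length ≤ m ∧
        (∀ u ∈ l, u ∈ ({thompsonX₀, thompsonX₁, thompsonX₀⁻¹, thompsonX₁⁻¹} :
          Set ThompsonF)) ∧ l.prod = g} := by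
  refine ⟨(2 : ℝ) ^ ((12 : ℝ))⁻¹, ?_, ?_⟩
  · rw [show (1:ℝ) = (2:ℝ) ^ (0:ℝ) by simp]
    exact Real.rpow_lt_rpow_of_exponent_lt (by norm_num) (by norm_num)
  · intro m
    show _ ≤ (Nat.card (ball m) : ℝ)
    have hpow : ((2 : ℝ) ^ ((12 : ℝ))⁻¹) ^ m = (2 : ℝ) ^ ((12 : ℝ)⁻¹ * m) := by
      rw [← Real.rpow_natCast ((2 : ℝ) ^ ((12 : ℝ))⁻¹) m, ← Real.rpow_mul (by norm_num)]
    rw [hpow]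
    by_cases hm : m ≤ 11
    · rcases Nat.eq_zero_or_pos m with h0 | h1
      · subst h0
        have : (1:ℕ) ≤ Nat.card (ball 0) := by
          simpa using card_ball_ge 0 0 (by norm_num)
        simp only [Nat.cast_zero, mul_zero, Real.rpow_zero]
        exact_mod_cast this
      · have hcard := two_le_card_ball h1
        have h2 : (2 : ℝ) ^ ((12 : ℝ)⁻¹ * m) ≤ 2 := by
          have hmle : ((12 : ℝ)⁻¹ * m) ≤ 1 := by
            have : (m : ℝ) ≤ 11 := by exact_mod_cast hm
            nlinarith
          have := Real.rpow_le_rpow_of_exponent_le (x := (2:ℝ)) (by norm_num) hmle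
          simpa using this
        calc (2 : ℝ) ^ ((12 : ℝ)⁻¹ * m) ≤ 2 := h2
          _ ≤ (Nat.card (ball m) : ℝ) := by exact_mod_cast hcard
    · push_neg at hm
      set n := m / 6 with hn
      have h6 : 6 * n ≤ m := by omega
      have hcard := card_ball_ge n m h6
      have hexp : (12 : ℝ)⁻¹ * m ≤ (n : ℝ) := by
        have : m ≤ 12 * n := by omega
        have : (m : ℝ) ≤ 12 * n := by exact_mod_cast this
        linarith
      calc (2 : ℝ) ^ ((12 : ℝ)⁻¹ * m) ≤ (2 : ℝ) ^ ((n : ℝ)) :=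
            Real.rpow_le_rpow_of_exponent_le (by norm_num) hexp
        _ = ((2 ^ n : ℕ) : ℝ) := by rw [Real.rpow_natCast]; push_cast; ring
        _ ≤ (Nat.card (ball m) : ℝ) := by exact_mod_cast hcard
end
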